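/- arXiv:math-ph/0404072 — 4 statements merged into one kernel-verified Lean document; each statement's English description precedes it below -/
import Mathlib

section
/- Let d ≥ 1, let Σ ⊆ ℝ^d be uniformly discrete with separation r_Σ > 0, let (μ_i)_{i∈Σ}, ℙ, p_i(ε) be as in the product-measure setup, and fix ε > 0 and a > 1. If ‖i‖^{d−1}·p_i(ε) → 0 as ‖i‖ → ∞ along i ∈ Σ, then for ℙ-almost every ω ∈ Ω there exists N ∈ ℕ such that for every n ≥ N there is r ∈ [a^n, a^{n+1} − n] for which the annulus A_{r,r+n} is ε-free for ω. -/
open MeasureTheory Set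

/-- The closed annulus `{x : r ≤ ‖x‖ ≤ R}` in `ℝ^d`. -/
def annulus (d : ℕ) (r R : ℝ) : Set (EuclideanSpace ℝ (Fin d)) :=
  {x | r ≤ ‖x‖ ∧ ‖x‖ ≤ R}

/-- A set `U ⊆ ℝ^d` is `ε`-free for `ω` if `ω i ≤ ε` for all `i ∈ Σ ∩ U`. -/
def epsFree {d : ℕ} (S : Set (EuclideanSpace ℝ (Fin d))) (ε : ℝ)
    (ω : S → ℝ) (U : Set (EuclideanSpace ℝ (Fin d))) : Prop :=
  ∀ i : S, (i : EuclideanSpace ℝ (Fin d)) ∈ U → ω i ≤ ε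

section Aux

open Filter Metric

lemma cyl_meas {ι : Type*} (T : Finset ι) (ε : ℝ) :
    MeasurableSet {ω : ι → ℝ | ∀ i ∈ T, ω i ≤ ε} := by
  have : {ω : ι → ℝ | ∀ i ∈ T, ω i ≤ ε} = ⋂ i ∈ T, {ω : ι → ℝ | ω i ≤ ε} := by
    ext ω; simp
  rw [this]
  exact MeasurableSet.biInter T.countable_toSet fun i _ =>
    (measurable_pi_apply i) measurableSet_Iic

lemma prob_inter_compl {ι : Type*} (P : Measure (ι → ℝ)) [IsProbabilityMeasure P]
    (μ : ι → Measure ℝ) (hμ : ∀ i, IsProbabilityMeasure (μ i))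
    (hprod : ∀ (t : Finset ι) (s : ι → Set ℝ), (∀ i, MeasurableSet (s i)) →
      P {ω | ∀ i ∈ t, ω i ∈ s i} = ∏ i ∈ t, μ i (s i))
    (ε : ℝ) (T : ℕ → Finset ι) (K : Finset ℕ) :
    ∀ L : Finset ℕ,
    (∀ k ∈ K ∪ L, ∀ l ∈ K ∪ L, k ≠ l → Disjoint (T k) (T l)) → Disjoint K L →
    P ((⋂ k ∈ K, {ω : ι → ℝ | ∀ i ∈ T k, ω i ≤ ε}ᶜ) ∩ ⋂ k ∈ L, {ω | ∀ i ∈ T k, ω i ≤ ε})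
      = (∏ k ∈ K, (1 - ∏ i ∈ T k, μ i (Iic ε))) * ∏ k ∈ L, ∏ i ∈ T k, μ i (Iic ε) := by
  classical
  induction K using Finset.induction_on with
  | empty =>
    intro L hdisj _
    simp only [Finset.notMem_empty, Set.iInter_of_empty, Set.iInter_univ, Set.univ_inter,
      Finset.prod_empty, one_mul]
    have hset : (⋂ k ∈ L, {ω : ι → ℝ | ∀ i ∈ T k, ω i ≤ ε})
        = {ω : ι → ℝ | ∀ i ∈ L.biUnion T, ω i ∈ Iic ε} := by
      ext ω; simp [Finset.mem_biUnion]; tauto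
    rw [hset, hprod (L.biUnion T) (fun _ => Iic ε) (fun _ => measurableSet_Iic), Finset.prod_biUnion]
    intro k hk l hl hkl
    exact hdisj k (by simpa using hk) l (by simpa using hl) hkl
  | @insert k₀ K' hk₀ ih =>
    intro L hdisj hKL
    have hk₀L : k₀ ∉ L := fun h => (Finset.disjoint_left.mp hKL (Finset.mem_insert_self k₀ K')) h
    have hdisj' : ∀ k ∈ K' ∪ insert k₀ L, ∀ l ∈ K' ∪ insert k₀ L, k ≠ l → Disjoint (T k) (T l) := by
      intro k hk l hl hkl
      apply hdisj k _ l _ hkl <;>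
      · simp only [Finset.mem_union, Finset.mem_insert] at *; tauto
    have hdisj'' : ∀ k ∈ K' ∪ L, ∀ l ∈ K' ∪ L, k ≠ l → Disjoint (T k) (T l) := by
      intro k hk l hl hkl
      apply hdisj k _ l _ hkl <;>
      · simp only [Finset.mem_union, Finset.mem_insert] at *; tauto
    have hKL' : Disjoint K' (insert k₀ L) := by
      rw [Finset.disjoint_insert_right]
      exact ⟨hk₀, Finset.disjoint_of_subset_left (Finset.subset_insert k₀ K') hKL⟩
    have hKL'' : Disjoint K' L := Finset.disjoint_of_subset_left (Finset.subset_insert k₀ K') hKL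
    set A := (⋂ k ∈ K', {ω : ι → ℝ | ∀ i ∈ T k, ω i ≤ ε}ᶜ) ∩ ⋂ k ∈ L, {ω | ∀ i ∈ T k, ω i ≤ ε}
      with hA
    set F := {ω : ι → ℝ | ∀ i ∈ T k₀, ω i ≤ ε} with hF
    have hsplit : (⋂ k ∈ insert k₀ K', {ω : ι → ℝ | ∀ i ∈ T k, ω i ≤ ε}ᶜ)
        ∩ ⋂ k ∈ L, {ω | ∀ i ∈ T k, ω i ≤ ε} = A \ F := by
      rw [Finset.set_biInter_insert]
      ext ω; simp only [hA, hF, Set.mem_inter_iff, Set.mem_diff, Set.mem_compl_iff]; tauto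
    have hAF : A ∩ F = (⋂ k ∈ K', {ω : ι → ℝ | ∀ i ∈ T k, ω i ≤ ε}ᶜ)
        ∩ ⋂ k ∈ insert k₀ L, {ω | ∀ i ∈ T k, ω i ≤ ε} := by
      rw [Finset.set_biInter_insert]
      ext ω; simp only [hA, hF, Set.mem_inter_iff]; tauto
    have hmeasF : MeasurableSet F := cyl_meas (T k₀) ε
    have hmeasA : MeasurableSet A := by
      apply MeasurableSet.inter
      · exact MeasurableSet.biInter K'.countable_toSet fun k _ => (cyl_meas (T k) ε).compl
      · exact MeasurableSet.biInter L.countable_toSet fun k _ => cyl_meas (T k) ε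
    have hd1 : A \ F = A \ (A ∩ F) := by rw [Set.diff_self_inter]
    rw [hsplit, hd1, measure_diff Set.inter_subset_left
      ((hmeasA.inter hmeasF).nullMeasurableSet) (measure_ne_top P _),
      hAF, ih L hdisj'' hKL'', ih (insert k₀ L) hdisj' hKL',
      Finset.prod_insert hk₀L, Finset.prod_insert hk₀]
    set x := ∏ k ∈ K', (1 - ∏ i ∈ T k, μ i (Iic ε)) with hx
    set y := ∏ k ∈ L, ∏ i ∈ T k, μ i (Iic ε) with hy
    set q := ∏ i ∈ T k₀, μ i (Iic ε) with hq
    have hq1 : q ≤ 1 := Finset.prod_le_one (fun _ _ => zero_le)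
      (fun i _ => prob_le_one)
    have hxt : x ≠ ⊤ := by
      refine (lt_of_le_of_lt (Finset.prod_le_one (fun _ _ => zero_le) ?_) ENNReal.one_lt_top).ne
      intro k _
      exact tsub_le_self.trans le_rfl
    have hyt : y ≠ ⊤ := by
      refine (lt_of_le_of_lt (Finset.prod_le_one (fun _ _ => zero_le) ?_) ENNReal.one_lt_top).ne
      intro k _
      exact Finset.prod_le_one (fun _ _ => zero_le) (fun i _ => prob_le_one)
    have key : x * y - x * (q * y) = (1 - q) * x * y := by
      rw [show x * (q * y) = (x * y) * q by ring, show (1-q)*x*y = (x*y)*(1-q) by ring,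
        ENNReal.mul_sub (fun _ _ => ENNReal.mul_ne_top hxt hyt), mul_one]
    exact key

lemma ball_vol {d : ℕ} (hd : 1 ≤ d) (x : EuclideanSpace ℝ (Fin d)) (s : ℝ) :
    volume (Metric.ball x s) = ENNReal.ofReal s ^ d *
      ENNReal.ofReal (Real.sqrt Real.pi ^ d / Real.Gamma ((d : ℝ) / 2 + 1)) := by
  haveI : Nonempty (Fin d) := Fin.pos_iff_nonempty.mp (by omega)
  rw [EuclideanSpace.volume_ball]
  simp [Fintype.card_fin]

lemma kappa_pos {d : ℕ} : 0 < Real.sqrt Real.pi ^ d / Real.Gamma ((d : ℝ) / 2 + 1) := by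
  apply div_pos
  · exact pow_pos (Real.sqrt_pos.mpr Real.pi_pos) d
  · exact Real.Gamma_pos_of_pos (by positivity)

lemma disj_balls {d : ℕ} {t : Finset (EuclideanSpace ℝ (Fin d))} {ρ : ℝ}
    (hsep : ∀ i ∈ t, ∀ j ∈ t, i ≠ j → 2 * ρ ≤ ‖i - j‖) :
    (↑t : Set (EuclideanSpace ℝ (Fin d))).PairwiseDisjoint (fun i => Metric.ball i ρ) := by
  intro i hi j hj hij
  apply Metric.ball_disjoint_ball
  rw [dist_eq_norm]
  have := hsep i hi j hj hij
  linarith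

lemma vol_union_balls {d : ℕ} (hd : 1 ≤ d) {t : Finset (EuclideanSpace ℝ (Fin d))} {ρ : ℝ}
    (hsep : ∀ i ∈ t, ∀ j ∈ t, i ≠ j → 2 * ρ ≤ ‖i - j‖) :
    volume (⋃ i ∈ t, Metric.ball i ρ) = (t.card : ENNReal) * (ENNReal.ofReal ρ ^ d *
      ENNReal.ofReal (Real.sqrt Real.pi ^ d / Real.Gamma ((d : ℝ) / 2 + 1))) := by
  rw [measure_biUnion_finset (disj_balls hsep) (fun i _ => measurableSet_ball)]
  rw [Finset.sum_congr rfl (fun i _ => ball_vol hd i ρ), Finset.sum_const, nsmul_eq_mul]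

/-- counting in a ball -/
lemma count_ball {d : ℕ} (hd : 1 ≤ d) {t : Finset (EuclideanSpace ℝ (Fin d))} {ρ R : ℝ}
    (hρ : 0 < ρ) (hR : 0 ≤ R)
    (hsep : ∀ i ∈ t, ∀ j ∈ t, i ≠ j → 2 * ρ ≤ ‖i - j‖)
    (hnorm : ∀ i ∈ t, ‖i‖ ≤ R) :
    (t.card : ℝ) * ρ ^ d ≤ (R + ρ) ^ d := by
  set κ := ENNReal.ofReal (Real.sqrt Real.pi ^ d / Real.Gamma ((d : ℝ) / 2 + 1)) with hκ
  have hκ0 : κ ≠ 0 := by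
    simp [hκ, ENNReal.ofReal_eq_zero, not_le, kappa_pos]
  have hκT : κ ≠ ⊤ := ENNReal.ofReal_ne_top
  have hsub : (⋃ i ∈ t, Metric.ball i ρ) ⊆ Metric.ball 0 (R + ρ) := by
    intro x hx
    simp only [Set.mem_iUnion] at hx
    obtain ⟨i, hi, hxi⟩ := hx
    rw [Metric.mem_ball] at hxi ⊢
    have h1 : dist x i < ρ := hxi
    have h2 : ‖i‖ ≤ R := hnorm i hi
    calc dist x 0 ≤ dist x i + dist i 0 := dist_triangle x i 0
    _ < ρ + R := by rw [dist_zero_right]; linarith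
    _ = R + ρ := by ring
  have hineq := (vol_union_balls hd hsep ▸ measure_mono hsub :
    (t.card : ENNReal) * (ENNReal.ofReal ρ ^ d * κ) ≤ volume (Metric.ball (0 : EuclideanSpace ℝ (Fin d)) (R + ρ)))
  rw [ball_vol hd 0 (R + ρ), ← hκ] at hineq
  rw [← mul_assoc] at hineq
  have := (ENNReal.mul_le_mul_iff_left hκ0 hκT).mp hineq
  have hcast : (t.card : ENNReal) * ENNReal.ofReal ρ ^ d
      = ENNReal.ofReal ((t.card : ℝ) * ρ ^ d) := by
    rw [ENNReal.ofReal_mul (by positivity), ← ENNReal.ofReal_pow hρ.le,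
      ENNReal.ofReal_natCast]
  rw [hcast, ← ENNReal.ofReal_pow (by positivity)] at this
  exact (ENNReal.ofReal_le_ofReal_iff (by positivity)).mp this

/-- counting in an annulus -/
lemma count_annulus {d : ℕ} (hd : 1 ≤ d) {t : Finset (EuclideanSpace ℝ (Fin d))} {ρ r R : ℝ}
    (hρ : 0 < ρ) (hρr : ρ ≤ r) (hrR : r ≤ R)
    (hsep : ∀ i ∈ t, ∀ j ∈ t, i ≠ j → 2 * ρ ≤ ‖i - j‖)
    (hnorm : ∀ i ∈ t, r ≤ ‖i‖ ∧ ‖i‖ ≤ R) :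
    (t.card : ℝ) * ρ ^ d + (r - ρ) ^ d ≤ (R + ρ) ^ d := by
  set κ := ENNReal.ofReal (Real.sqrt Real.pi ^ d / Real.Gamma ((d : ℝ) / 2 + 1)) with hκ
  have hκ0 : κ ≠ 0 := by
    simp [hκ, ENNReal.ofReal_eq_zero, not_le, kappa_pos]
  have hκT : κ ≠ ⊤ := ENNReal.ofReal_ne_top
  set U := ⋃ i ∈ t, Metric.ball i ρ with hU
  set B := Metric.ball (0 : EuclideanSpace ℝ (Fin d)) (r - ρ) with hB
  have hdisjUB : Disjoint U B := by
    rw [Set.disjoint_left]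
    intro x hx hxB
    simp only [hU, Set.mem_iUnion] at hx
    obtain ⟨i, hi, hxi⟩ := hx
    rw [Metric.mem_ball] at hxi
    rw [hB, Metric.mem_ball, dist_zero_right] at hxB
    have h2 : r ≤ ‖i‖ := (hnorm i hi).1
    have : ‖i‖ ≤ ‖x‖ + dist x i := by
      rw [dist_eq_norm]
      calc ‖i‖ = ‖x - (x - i)‖ := by rw [sub_sub_cancel]
      _ ≤ ‖x‖ + ‖x - i‖ := norm_sub_le x (x - i)
    linarith
  have hsub : U ∪ B ⊆ Metric.ball 0 (R + ρ) := by
    apply Set.union_subset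
    · intro x hx
      simp only [hU, Set.mem_iUnion] at hx
      obtain ⟨i, hi, hxi⟩ := hx
      rw [Metric.mem_ball] at hxi ⊢
      have h2 : ‖i‖ ≤ R := (hnorm i hi).2
      calc dist x 0 ≤ dist x i + dist i 0 := dist_triangle x i 0
      _ < ρ + R := by rw [dist_zero_right]; linarith [hxi]
      _ = R + ρ := by ring
    · intro x hx
      rw [hB, Metric.mem_ball] at hx
      rw [Metric.mem_ball]
      linarith
  have hvol : volume U + volume B ≤ volume (Metric.ball (0 : EuclideanSpace ℝ (Fin d)) (R + ρ)) := by
    rw [← measure_union hdisjUB measurableSet_ball]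
    exact measure_mono hsub
  rw [vol_union_balls hd hsep, ball_vol hd, ball_vol hd, ← hκ, ← mul_assoc, ← add_mul] at hvol
  have := (ENNReal.mul_le_mul_iff_left hκ0 hκT).mp hvol
  have hrρ : (0:ℝ) ≤ r - ρ := by linarith
  have hRρ : (0:ℝ) ≤ R + ρ := by linarith
  have hcast : (t.card : ENNReal) * ENNReal.ofReal ρ ^ d + ENNReal.ofReal (r - ρ) ^ d
      = ENNReal.ofReal ((t.card : ℝ) * ρ ^ d + (r - ρ) ^ d) := by
    rw [ENNReal.ofReal_add (by positivity) (by positivity), ENNReal.ofReal_mul (by positivity),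
      ← ENNReal.ofReal_pow hρ.le, ← ENNReal.ofReal_pow hrρ, ENNReal.ofReal_natCast]
  rw [hcast, ← ENNReal.ofReal_pow hRρ] at this
  exact (ENNReal.ofReal_le_ofReal_iff (by positivity)).mp this

lemma pow_sub_pow_le (d : ℕ) {x y : ℝ} (hy : 0 ≤ y) (hxy : y ≤ x) :
    x ^ d - y ^ d ≤ d * x ^ (d - 1) * (x - y) := by
  rw [← geom_sum₂_mul x y d]
  have hx : 0 ≤ x := hy.trans hxy
  have hsum : (∑ i ∈ Finset.range d, x ^ i * y ^ (d - 1 - i)) ≤ d * x ^ (d - 1) := by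
    calc (∑ i ∈ Finset.range d, x ^ i * y ^ (d - 1 - i))
        ≤ ∑ i ∈ Finset.range d, x ^ (d - 1) := by
          apply Finset.sum_le_sum
          intro i hi
          rw [Finset.mem_range] at hi
          calc x ^ i * y ^ (d - 1 - i) ≤ x ^ i * x ^ (d - 1 - i) := by
                apply mul_le_mul_of_nonneg_left (pow_le_pow_left₀ hy hxy _) (by positivity)
          _ = x ^ (i + (d - 1 - i)) := (pow_add x i (d - 1 - i)).symm
          _ = x ^ (d - 1) := by congr 1; omega
    _ = d * x ^ (d - 1) := by rw [Finset.sum_const, Finset.card_range, nsmul_eq_mul]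
  exact mul_le_mul_of_nonneg_right hsum (by linarith)

lemma one_sub_le_exp_neg' (x : ℝ) : 1 - x ≤ Real.exp (-x) := by
  have := Real.add_one_le_exp (-x)
  linarith

lemma exp_neg_two_le_one_sub {x : ℝ} (h0 : 0 ≤ x) (h2 : x ≤ 1/2) :
    Real.exp (-(2*x)) ≤ 1 - x := by
  have h1 : 1 + 2*x ≤ Real.exp (2*x) := by linarith [Real.add_one_le_exp (2*x)]
  have hpos : 0 < Real.exp (2*x) := Real.exp_pos _
  have hinv : Real.exp (-(2*x)) = 1 / Real.exp (2*x) := by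
    rw [Real.exp_neg]; ring
  rw [hinv, div_le_iff₀ hpos]
  nlinarith

lemma asymp_main {a : ℝ} (ha : 1 < a) :
    ∀ᶠ n : ℕ in atTop, (n : ℝ) * Real.log 2 * (n + 1) ≤
      ((a - 1) * a ^ n - (2 * n + 1)) * Real.exp (-(Real.log a * (n + 2) / 4)) := by
  have ha0 : 0 < a := by linarith
  set L := Real.log a with hLdef
  have hL : 0 < L := Real.log_pos ha
  set c := Real.exp (3 * L / 4) with hc
  have hc1 : 1 < c := by
    rw [hc, ← Real.exp_zero]
    exact Real.exp_lt_exp.mpr (by linarith)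
  set D := (a - 1) * Real.exp (-(L / 2)) with hD
  have hD0 : 0 < D := mul_pos (by linarith) (Real.exp_pos _)
  have key : ∀ n : ℕ, (a - 1) * a ^ n * Real.exp (-(L * (n + 2) / 4)) = D * c ^ n := by
    intro n
    have h1 : a ^ n = Real.exp ((n : ℝ) * L) := by
      rw [← Real.exp_log ha0, ← Real.exp_nat_mul, hLdef]
    rw [h1, hD, hc, ← Real.exp_nat_mul]
    rw [mul_assoc, ← Real.exp_add, mul_assoc, ← Real.exp_add]
    congr 2
    ring
  have hev1 : ∀ᶠ n : ℕ in atTop, ((n : ℝ)) ^ 2 / c ^ n < D / 12 :=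
    (tendsto_pow_const_div_const_pow_of_one_lt 2 hc1).eventually_lt_const (by positivity)
  filter_upwards [hev1, eventually_ge_atTop 1] with n hn hn1
  have hcn : (0:ℝ) < c ^ n := by positivity
  have h12 : 12 * (n : ℝ) ^ 2 ≤ D * c ^ n := by
    rw [div_lt_iff₀ hcn] at hn
    nlinarith
  have hn1' : (1:ℝ) ≤ (n:ℝ) := by exact_mod_cast hn1
  have hw0 : 0 < Real.exp (-(L * (n + 2) / 4)) := Real.exp_pos _
  have hw1 : Real.exp (-(L * (n + 2) / 4)) ≤ 1 := by
    rw [Real.exp_le_one_iff]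
    have : (0:ℝ) ≤ (n:ℝ) + 2 := by positivity
    nlinarith
  have hlog2 : Real.log 2 ≤ 1 := by
    have := Real.log_le_sub_one_of_pos (by norm_num : (0:ℝ) < 2)
    linarith
  have hlog2' : 0 ≤ Real.log 2 := Real.log_nonneg (by norm_num)
  have hkey := key n
  nlinarith [hkey, h12, hw0, hw1, hn1', hlog2, hlog2',
    mul_le_mul_of_nonneg_right hw1 (by positivity : (0:ℝ) ≤ 2*(n:ℝ)+1)]

end Aux

set_option maxHeartbeats 2000000 in
theorem stmt1 (d : ℕ) (hd : 1 ≤ d) (S : Set (EuclideanSpace ℝ (Fin d)))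
    (rSigma : ℝ) (hrSigma : 0 < rSigma)
    (hdisc : ∀ i ∈ S, ∀ j ∈ S, i ≠ j → rSigma ≤ ‖i - j‖)
    (μ : S → Measure ℝ) (hprob : ∀ i, IsProbabilityMeasure (μ i))
    (hsupp : ∀ i, μ i (Icc (0 : ℝ) 1) = 1)
    (P : Measure (S → ℝ)) (hPprob : IsProbabilityMeasure P)
    (hprod : ∀ (t : Finset S) (s : S → Set ℝ), (∀ i, MeasurableSet (s i)) →
      P {ω | ∀ i ∈ t, ω i ∈ s i} = ∏ i ∈ t, μ i (s i))
    (ε : ℝ) (hε : 0 < ε) (a : ℝ) (ha : 1 < a)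
    (hdecay : Filter.Tendsto
      (fun i : S => ‖(i : EuclideanSpace ℝ (Fin d))‖ ^ (d - 1) * (μ i (Icc ε 1)).toReal)
      (Filter.comap (fun i : S => ‖(i : EuclideanSpace ℝ (Fin d))‖) Filter.atTop)
      (nhds 0)) :
    ∀ᵐ ω ∂P, ∃ N : ℕ, ∀ n : ℕ, N ≤ n →
      ∃ r ∈ Icc (a ^ n) (a ^ (n + 1) - (n : ℝ)),
        epsFree S ε ω (annulus d r (r + (n : ℝ))) := by
  classical
  haveI := hPprob
  have ha0 : (0:ℝ) < a := by linarith
  set L := Real.log a with hLdef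
  have hL : 0 < L := Real.log_pos ha
  set ρ := min (rSigma / 2) 1 with hρdef
  have hρ0 : 0 < ρ := lt_min (by linarith) one_pos
  have hρ1 : ρ ≤ 1 := min_le_right _ _
  have h2ρ : ∀ i j : S, i ≠ j →
      2 * ρ ≤ ‖(i : EuclideanSpace ℝ (Fin d)) - (j : EuclideanSpace ℝ (Fin d))‖ := by
    intro i j hij
    have h1 : rSigma ≤ ‖(i : EuclideanSpace ℝ (Fin d)) - (j : EuclideanSpace ℝ (Fin d))‖ :=
      hdisc i i.2 j j.2 (fun h => hij (Subtype.ext h))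
    have h2 : ρ ≤ rSigma / 2 := min_le_left _ _
    linarith
  have hd' : (1:ℝ) ≤ (d:ℝ) := by exact_mod_cast hd
  set C₃ := (d:ℝ) * a ^ (d-1) / ρ ^ d with hC₃def
  have hC₃0 : 0 < C₃ := div_pos (mul_pos (by linarith) (pow_pos ha0 _)) (pow_pos hρ0 _)
  set η := min (L / (8 * C₃)) (1/2) with hηdef
  have hη0 : 0 < η := lt_min (by positivity) (by norm_num)
  have hη2 : η ≤ 1/2 := min_le_right _ _
  -- extract radius threshold from decay hypothesis
  obtain ⟨Rη, hRη⟩ : ∃ R₀ : ℝ, ∀ i : S, R₀ ≤ ‖(i : EuclideanSpace ℝ (Fin d))‖ →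
      ‖(i : EuclideanSpace ℝ (Fin d))‖ ^ (d-1) * (μ i (Icc ε 1)).toReal < η := by
    have hev := hdecay.eventually_lt_const hη0
    rw [Filter.eventually_iff, Filter.mem_comap] at hev
    obtain ⟨t, ht, hsub⟩ := hev
    rw [Filter.mem_atTop_sets] at ht
    obtain ⟨R₀, hR₀⟩ := ht
    exact ⟨R₀, fun i hi => hsub (hR₀ _ hi)⟩
  -- finiteness of bounded pieces of S
  have hfinball : ∀ R : ℝ, ({i : S | ‖(i : EuclideanSpace ℝ (Fin d))‖ ≤ R}).Finite := by
    intro R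
    by_cases hR : 0 ≤ R
    · by_contra hinf
      obtain ⟨t, hts, hcard⟩ := Set.Infinite.exists_subset_card_eq hinf (⌈(R+ρ)^d / ρ^d⌉₊ + 1)
      set t' := t.image (Subtype.val) with ht'
      have hcard' : t'.card = t.card := Finset.card_image_of_injective t Subtype.val_injective
      have hsep' : ∀ p ∈ t', ∀ q ∈ t', p ≠ q → 2*ρ ≤ ‖p - q‖ := by
        intro p hp q hq hpq
        obtain ⟨ip, hip, rfl⟩ := Finset.mem_image.mp hp
        obtain ⟨iq, hiq, rfl⟩ := Finset.mem_image.mp hq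
        exact h2ρ ip iq (fun h => hpq (by rw [h]))
      have hnorm' : ∀ p ∈ t', ‖p‖ ≤ R := by
        intro p hp
        obtain ⟨ip, hip, rfl⟩ := Finset.mem_image.mp hp
        exact hts hip
      have hb := count_ball hd hρ0 hR hsep' hnorm'
      rw [hcard', hcard] at hb
      have hceil : (R+ρ)^d / ρ^d ≤ ((⌈(R+ρ)^d / ρ^d⌉₊ : ℝ)) := Nat.le_ceil _
      have hρd : (0:ℝ) < ρ^d := pow_pos hρ0 _
      rw [div_le_iff₀ hρd] at hceil
      push_cast at hb
      nlinarith
    · have : {i : S | ‖(i : EuclideanSpace ℝ (Fin d))‖ ≤ R} = ∅ := by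
        ext i; simp only [Set.mem_setOf_eq, Set.mem_empty_iff_false, iff_false, not_le]
        have : (0:ℝ) ≤ ‖(i : EuclideanSpace ℝ (Fin d))‖ := norm_nonneg _
        linarith [lt_of_not_ge hR]
      rw [this]; exact Set.finite_empty
  have hannfin : ∀ r R : ℝ, ({i : S | (i : EuclideanSpace ℝ (Fin d)) ∈ annulus d r R}).Finite := by
    intro r R
    apply (hfinball R).subset
    intro i hi
    exact hi.2
  -- the annuli
  set rad : ℕ → ℕ → ℝ := fun n k => a^n + k*((n:ℝ)+1) with hraddef
  set m : ℕ → ℕ := fun n => ⌊((a-1)*a^n - n)/((n:ℝ)+1)⌋₊ with hmdef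
  set T : ℕ → ℕ → Finset S :=
    fun n k => (hannfin (rad n k) (rad n k + n)).toFinset with hTdef
  have hTmem : ∀ n k (i : S), i ∈ T n k ↔
      (rad n k ≤ ‖(i : EuclideanSpace ℝ (Fin d))‖ ∧
        ‖(i : EuclideanSpace ℝ (Fin d))‖ ≤ rad n k + n) := by
    intro n k i
    rw [hTdef]
    simp only [Set.Finite.mem_toFinset, Set.mem_setOf_eq]
    rfl
  have hradlb : ∀ n k : ℕ, a^n ≤ rad n k := by
    intro n k
    show a^n ≤ a^n + (k:ℝ)*((n:ℝ)+1)
    have : (0:ℝ) ≤ (k:ℝ)*((n:ℝ)+1) := by positivity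
    linarith
  have hradub : ∀ n k : ℕ, k < m n → rad n k ≤ a^(n+1) - 2*n - 1 := by
    intro n k hk
    set x := ((a-1)*a^n - n)/((n:ℝ)+1) with hx
    have hx0 : 0 ≤ x := by
      by_contra h
      rw [hmdef] at hk
      have h0 : ⌊x⌋₊ = 0 := Nat.floor_of_nonpos (le_of_not_ge h)
      rw [hx] at h0
      simp only [h0] at hk
      omega
    have h1 : ((k:ℝ)) + 1 ≤ x := by
      have h2 : (k+1 : ℕ) ≤ ⌊x⌋₊ := hk
      have := (Nat.le_floor_iff hx0).mp h2
      push_cast at this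
      linarith
    have hn1 : (0:ℝ) < (n:ℝ)+1 := by positivity
    have hxmul : x * ((n:ℝ)+1) = (a-1)*a^n - n := div_mul_cancel₀ _ (ne_of_gt hn1)
    have hk1 : (k:ℝ) * ((n:ℝ)+1) ≤ (a-1)*a^n - n - ((n:ℝ)+1) := by nlinarith
    have hpow : a^(n+1) = a^n * a := pow_succ a n
    show a^n + (k:ℝ)*((n:ℝ)+1) ≤ a^(n+1) - 2*n - 1
    nlinarith
  have hTdisj : ∀ n, ∀ k l, k ≠ l → Disjoint (T n k) (T n l) := by
    have haux : ∀ n, ∀ k l, k < l → Disjoint (T n k) (T n l) := by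
      intro n k l hkl
      rw [Finset.disjoint_left]
      intro i hik hil
      rw [hTmem] at hik hil
      have hstep : rad n k + n < rad n l := by
        show (a^n + (k:ℝ)*((n:ℝ)+1)) + (n:ℝ) < a^n + (l:ℝ)*((n:ℝ)+1)
        have : (k:ℝ) + 1 ≤ (l:ℝ) := by exact_mod_cast hkl
        nlinarith
      linarith [hik.2, hil.1]
    intro n k l hkl
    rcases lt_or_gt_of_ne hkl with h | h
    · exact haux n k l h
    · exact (haux n l k h).symm
  -- probability identity
  have hPEn : ∀ n, P (⋂ k ∈ Finset.range (m n), {ω : S → ℝ | ∀ i ∈ T n k, ω i ≤ ε}ᶜ)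
      = ∏ k ∈ Finset.range (m n), (1 - ∏ i ∈ T n k, μ i (Iic ε)) := by
    intro n
    have h := prob_inter_compl P μ hprob hprod ε (T n) (Finset.range (m n)) ∅
      (fun k _ l _ hkl => hTdisj n k l hkl) (Finset.disjoint_empty_right _)
    simpa using h
  -- eventual estimate
  have hN1 : ∀ᶠ n : ℕ in Filter.atTop, Rη ≤ a^n :=
    (tendsto_pow_atTop_atTop_of_one_lt ha).eventually_ge_atTop Rη
  have hmain : ∀ᶠ n : ℕ in Filter.atTop,
      P (⋂ k ∈ Finset.range (m n), {ω : S → ℝ | ∀ i ∈ T n k, ω i ≤ ε}ᶜ)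
        ≤ ENNReal.ofReal ((1/2:ℝ)^n) := by
    filter_upwards [hN1, asymp_main ha] with n hn hasymp
    set w := Real.exp (-(L*((n:ℝ)+2)/4)) with hwdef
    have hw0 : 0 < w := Real.exp_pos _
    have hw1 : w ≤ 1 := by
      rw [hwdef, Real.exp_le_one_iff]
      have h1 : (0:ℝ) ≤ (n:ℝ)+2 := by positivity
      nlinarith
    have honow : 1 ≤ a^n := one_le_pow₀ ha.le
    -- per-annulus bound
    have hkbound : ∀ k ∈ Finset.range (m n),
        (1 - ∏ i ∈ T n k, μ i (Iic ε)) ≤ ENNReal.ofReal (1 - w) := by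
      intro k hkm
      rw [Finset.mem_range] at hkm
      set r := rad n k with hrdef
      have hran : a^n ≤ r := hradlb n k
      have hrup : r ≤ a^(n+1) - 2*n - 1 := hradub n k hkm
      have hr1 : 1 ≤ r := le_trans honow hran
      -- cardinality bound
      set t' := (T n k).image (Subtype.val) with ht'
      have hcard' : t'.card = (T n k).card := Finset.card_image_of_injective _ Subtype.val_injective
      have hsep' : ∀ p ∈ t', ∀ q ∈ t', p ≠ q → 2*ρ ≤ ‖p - q‖ := by
        intro p hp q hq hpq
        obtain ⟨ip, hip, rfl⟩ := Finset.mem_image.mp hp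
        obtain ⟨iq, hiq, rfl⟩ := Finset.mem_image.mp hq
        exact h2ρ ip iq (fun h => hpq (by rw [h]))
      have hnorm' : ∀ p ∈ t', r ≤ ‖p‖ ∧ ‖p‖ ≤ r + n := by
        intro p hp
        obtain ⟨ip, hip, rfl⟩ := Finset.mem_image.mp hp
        exact (hTmem n k ip).mp hip
      have hcount := count_annulus hd hρ0 (le_trans hρ1 hr1) (by linarith [Nat.cast_nonneg (α := ℝ) n] : r ≤ r + (n:ℝ)) hsep' hnorm'
      have hpowdiff := pow_sub_pow_le d (show (0:ℝ) ≤ r - ρ by linarith)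
        (show r - ρ ≤ (r + n) + ρ by linarith [Nat.cast_nonneg (α := ℝ) n, hρ0.le])
      have hRa : r + (n:ℝ) + ρ ≤ a^(n+1) := by
        have hn0 : (0:ℝ) ≤ (n:ℝ) := Nat.cast_nonneg n
        linarith
      have hRa0 : (0:ℝ) ≤ r + (n:ℝ) + ρ := by
        have hn0 : (0:ℝ) ≤ (n:ℝ) := Nat.cast_nonneg n
        linarith
      have hpow1 : (r + (n:ℝ) + ρ)^(d-1) ≤ (a^(n+1))^(d-1) := pow_le_pow_left₀ hRa0 hRa _
      have hexps : ((a^(n+1):ℝ))^(d-1) = a^(n*(d-1)) * a^(d-1) := by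
        rw [← pow_mul, ← pow_add]
        congr 1
        rw [Nat.succ_mul]
      have hand : a^(n*(d-1)) = (a^n)^(d-1) := pow_mul a n (d-1)
      have hcardb : ((T n k).card : ℝ) * ρ^d ≤ (d:ℝ) * (a^(n*(d-1)) * a^(d-1)) * ((n:ℝ)+2) := by
        have h1 : ((T n k).card : ℝ) * ρ^d ≤ ((r + n) + ρ)^d - (r - ρ)^d := by
          rw [← hcard']
          linarith [hcount]
        have h2 : ((r + n) + ρ)^d - (r - ρ)^d ≤ (d:ℝ) * ((r+n)+ρ)^(d-1) * ((n:ℝ) + 2*ρ) := by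
          have := hpowdiff
          have heq : ((r + (n:ℝ)) + ρ) - (r - ρ) = (n:ℝ) + 2*ρ := by ring
          rw [heq] at this
          exact this
        have h3 : (d:ℝ) * ((r+n)+ρ)^(d-1) * ((n:ℝ) + 2*ρ) ≤ (d:ℝ) * (a^(n*(d-1)) * a^(d-1)) * ((n:ℝ)+2) := by
          have hp1 : (0:ℝ) ≤ ((r+n)+ρ)^(d-1) := pow_nonneg hRa0 _
          have hp2 : (n:ℝ) + 2*ρ ≤ (n:ℝ) + 2 := by linarith
          have hp3 : (0:ℝ) ≤ (n:ℝ) + 2*ρ := by positivity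
          rw [← hexps]
          have := mul_le_mul (mul_le_mul_of_nonneg_left hpow1 (by positivity : (0:ℝ) ≤ (d:ℝ))) hp2 hp3 (by positivity)
          calc (d:ℝ) * ((r+n)+ρ)^(d-1) * ((n:ℝ) + 2*ρ)
              ≤ (d:ℝ) * (a^(n+1))^(d-1) * ((n:ℝ)+2) := this
          _ = (d:ℝ) * ((a^(n+1))^(d-1)) * ((n:ℝ)+2) := by ring
        linarith
      -- per-point probability bound
      have hpbound : ∀ i ∈ T n k,
          (μ i (Icc ε 1)).toReal * a^(n*(d-1)) ≤ η := by
        intro i hi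
        have hni : a^n ≤ ‖(i : EuclideanSpace ℝ (Fin d))‖ := le_trans hran ((hTmem n k i).mp hi).1
        have hδ := hRη i (le_trans hn hni)
        have hpow2 : a^(n*(d-1)) ≤ ‖(i : EuclideanSpace ℝ (Fin d))‖^(d-1) := by
          rw [hand]
          exact pow_le_pow_left₀ (by positivity) hni _
        have hp0 : 0 ≤ (μ i (Icc ε 1)).toReal := ENNReal.toReal_nonneg
        nlinarith
      have hadpos : (0:ℝ) < a^(n*(d-1)) := pow_pos ha0 _
      have had1 : (1:ℝ) ≤ a^(n*(d-1)) := one_le_pow₀ ha.le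
      have hphalf : ∀ i ∈ T n k, (μ i (Icc ε 1)).toReal ≤ 1/2 := by
        intro i hi
        have h1 := hpbound i hi
        have hp0 : 0 ≤ (μ i (Icc ε 1)).toReal := ENNReal.toReal_nonneg
        nlinarith
      -- sum bound
      have hsumb : ∑ i ∈ T n k, (μ i (Icc ε 1)).toReal ≤ C₃ * η * ((n:ℝ)+2) := by
        have h1 : ∑ i ∈ T n k, (μ i (Icc ε 1)).toReal ≤ (T n k).card • (η / a^(n*(d-1))) := by
          apply Finset.sum_le_card_nsmul
          intro i hi
          rw [le_div_iff₀ hadpos]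
          exact hpbound i hi
        rw [nsmul_eq_mul] at h1
        have h2 : ((T n k).card : ℝ) * (η / a^(n*(d-1))) ≤ C₃ * η * ((n:ℝ)+2) := by
          rw [hC₃def]
          rw [div_mul_eq_mul_div, div_mul_eq_mul_div, le_div_iff₀ (pow_pos hρ0 d)]
          have hρd : (0:ℝ) < ρ^d := pow_pos hρ0 d
          have hη' : 0 < η := hη0
          calc ((T n k).card : ℝ) * (η / a^(n*(d-1))) * ρ^d
              = (((T n k).card : ℝ) * ρ^d) * (η / a^(n*(d-1))) := by ring
          _ ≤ ((d:ℝ) * (a^(n*(d-1)) * a^(d-1)) * ((n:ℝ)+2)) * (η / a^(n*(d-1))) := by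
                apply mul_le_mul_of_nonneg_right hcardb (by positivity)
          _ = (d:ℝ) * a^(d-1) * η * ((n:ℝ)+2) := by
                field_simp
        linarith
      have hC₃η : C₃ * η ≤ L/8 := by
        have h1 : η ≤ L/(8*C₃) := min_le_left _ _
        calc C₃ * η ≤ C₃ * (L/(8*C₃)) := mul_le_mul_of_nonneg_left h1 hC₃0.le
        _ = L/8 := by field_simp
      -- lower bound on free probability
      have hq_lb : ∀ i ∈ T n k, Real.exp (-(2 * (μ i (Icc ε 1)).toReal)) ≤ (μ i (Iic ε)).toReal := by
        intro i hi
        haveI := hprob i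
        have hp2 := hphalf i hi
        have hp0 : 0 ≤ (μ i (Icc ε 1)).toReal := ENNReal.toReal_nonneg
        have hmeas1 : 1 ≤ (μ i (Iic ε)).toReal + (μ i (Icc ε 1)).toReal := by
          have hsub : Icc (0:ℝ) 1 ⊆ Iic ε ∪ Icc ε 1 := by
            intro x hx
            rcases le_or_gt x ε with h | h
            · exact Or.inl h
            · exact Or.inr ⟨h.le, hx.2⟩
          have hle : (1:ENNReal) ≤ μ i (Iic ε) + μ i (Icc ε 1) := by
            rw [← hsupp i]
            exact (measure_mono hsub).trans (measure_union_le _ _)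
          have hne : μ i (Iic ε) + μ i (Icc ε 1) ≠ ⊤ :=
            ENNReal.add_ne_top.mpr ⟨measure_ne_top _ _, measure_ne_top _ _⟩
          have := ENNReal.toReal_mono hne hle
          rw [ENNReal.toReal_one, ENNReal.toReal_add (measure_ne_top _ _) (measure_ne_top _ _)] at this
          exact this
        calc Real.exp (-(2 * (μ i (Icc ε 1)).toReal)) ≤ 1 - (μ i (Icc ε 1)).toReal :=
              exp_neg_two_le_one_sub hp0 hp2
        _ ≤ (μ i (Iic ε)).toReal := by linarith
      have hQ : w ≤ ∏ i ∈ T n k, (μ i (Iic ε)).toReal := by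
        calc w ≤ Real.exp (-(2 * ∑ i ∈ T n k, (μ i (Icc ε 1)).toReal)) := by
              apply Real.exp_le_exp.mpr
              have h1 : (0:ℝ) ≤ (n:ℝ)+2 := by positivity
              nlinarith
        _ = ∏ i ∈ T n k, Real.exp (-(2 * (μ i (Icc ε 1)).toReal)) := by
              rw [← Real.exp_sum]
              congr 1
              rw [Finset.mul_sum, ← Finset.sum_neg_distrib]
        _ ≤ ∏ i ∈ T n k, (μ i (Iic ε)).toReal := by
              apply Finset.prod_le_prod (fun i _ => (Real.exp_pos _).le) hq_lb
      have hqReal : (∏ i ∈ T n k, μ i (Iic ε)).toReal = ∏ i ∈ T n k, (μ i (Iic ε)).toReal :=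
        ENNReal.toReal_prod _ _
      have hofw : ENNReal.ofReal w ≤ ∏ i ∈ T n k, μ i (Iic ε) :=
        ENNReal.ofReal_le_of_le_toReal (hqReal ▸ hQ)
      calc (1 : ENNReal) - ∏ i ∈ T n k, μ i (Iic ε) ≤ 1 - ENNReal.ofReal w :=
            tsub_le_tsub_left hofw 1
      _ = ENNReal.ofReal (1 - w) := by
            rw [ENNReal.ofReal_sub _ hw0.le, ENNReal.ofReal_one]
    -- combine over all annuli
    rw [hPEn n]
    have hprodb : ∏ k ∈ Finset.range (m n), (1 - ∏ i ∈ T n k, μ i (Iic ε))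
        ≤ ∏ _k ∈ Finset.range (m n), ENNReal.ofReal (1 - w) := Finset.prod_le_prod' hkbound
    calc ∏ k ∈ Finset.range (m n), (1 - ∏ i ∈ T n k, μ i (Iic ε))
        ≤ ∏ _k ∈ Finset.range (m n), ENNReal.ofReal (1 - w) := hprodb
    _ = ENNReal.ofReal (1 - w) ^ (m n) := by rw [Finset.prod_const, Finset.card_range]
    _ = ENNReal.ofReal ((1 - w) ^ (m n)) := (ENNReal.ofReal_pow (by linarith) _).symm
    _ ≤ ENNReal.ofReal ((1/2:ℝ)^n) := by
        apply ENNReal.ofReal_le_ofReal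
        -- real estimate
        have hx0 : (0:ℝ) < (n:ℝ)+1 := by positivity
        set x := ((a-1)*a^n - n)/((n:ℝ)+1) with hxdef
        have hmx : x - 1 < (m n : ℝ) := by
          rw [hmdef]
          exact Nat.sub_one_lt_floor x
        have hxmul : x * ((n:ℝ)+1) = (a-1)*a^n - n := div_mul_cancel₀ _ (ne_of_gt hx0)
        have hfact : (x - 1) * ((n:ℝ)+1) = (a-1)*a^n - (2*n+1) := by
          rw [sub_mul, hxmul]; ring
        have hwm : (n:ℝ) * Real.log 2 ≤ w * (m n) := by
          have h1 : (n:ℝ) * Real.log 2 * ((n:ℝ)+1) ≤ ((a-1)*a^n - (2*(n:ℝ)+1)) * w := hasymp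
          rw [← hfact] at h1
          have h2 : (n:ℝ) * Real.log 2 ≤ (x-1) * w := by nlinarith [h1, hx0]
          calc (n:ℝ) * Real.log 2 ≤ (x-1) * w := h2
          _ ≤ (m n : ℝ) * w := mul_le_mul_of_nonneg_right hmx.le hw0.le
          _ = w * (m n : ℝ) := by ring
        calc (1 - w) ^ (m n) ≤ Real.exp (-w) ^ (m n) :=
              pow_le_pow_left₀ (by linarith) (one_sub_le_exp_neg' w) _
        _ = Real.exp (-(w * (m n))) := by
              rw [← Real.exp_nat_mul]
              congr 1
              ring
        _ ≤ Real.exp (-((n:ℝ) * Real.log 2)) := Real.exp_le_exp.mpr (by linarith)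
        _ = (1/2:ℝ)^n := by
              rw [show -((n:ℝ) * Real.log 2) = (n:ℝ) * (-Real.log 2) by ring,
                Real.exp_nat_mul, Real.exp_neg, Real.exp_log (by norm_num : (0:ℝ) < 2)]
              norm_num
  -- Borel–Cantelli
  obtain ⟨N₂, hN₂⟩ := Filter.eventually_atTop.mp hmain
  have htsum : ∑' n : ℕ, P (⋂ k ∈ Finset.range (m n), {ω : S → ℝ | ∀ i ∈ T n k, ω i ≤ ε}ᶜ) ≠ ⊤ := by
    have hb : ∀ n : ℕ, P (⋂ k ∈ Finset.range (m n), {ω : S → ℝ | ∀ i ∈ T n k, ω i ≤ ε}ᶜ)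
        ≤ (if n < N₂ then 1 else 0) + ENNReal.ofReal ((1/2:ℝ)^n) := by
      intro n
      by_cases h : n < N₂
      · simp only [h, if_true]
        exact le_add_right prob_le_one
      · simp only [h, if_false, zero_add]
        exact hN₂ n (le_of_not_gt h)
    refine ne_top_of_le_ne_top ?_ (ENNReal.tsum_le_tsum hb)
    rw [ENNReal.tsum_add]
    apply ENNReal.add_ne_top.mpr
    constructor
    · have heq : ∑' n : ℕ, (if n < N₂ then (1:ENNReal) else 0)
          = ∑ n ∈ Finset.range N₂, (if n < N₂ then (1:ENNReal) else 0) := by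
        apply tsum_eq_sum
        intro b hb'
        rw [Finset.mem_range] at hb'
        simp [hb']
      rw [heq]
      have hlt : ∀ x ∈ Finset.range N₂, (if x < N₂ then (1:ENNReal) else 0) < ⊤ := by
        intro x _
        split <;> simp
      exact (ENNReal.sum_lt_top.mpr hlt).ne
    · have heq : ∀ n : ℕ, ENNReal.ofReal ((1/2:ℝ)^n) = (ENNReal.ofReal (1/2))^n :=
        fun n => ENNReal.ofReal_pow (by norm_num) n
      rw [tsum_congr heq, ENNReal.tsum_geometric]
      have hr : ENNReal.ofReal (1/2) < 1 := ENNReal.ofReal_lt_one.mpr (by norm_num)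
      exact ENNReal.inv_ne_top.mpr (tsub_pos_of_lt hr).ne'
  have hae := MeasureTheory.ae_eventually_notMem (μ := P) htsum
  filter_upwards [hae] with ω hω
  obtain ⟨N₀, hN₀⟩ := Filter.eventually_atTop.mp hω
  refine ⟨N₀, fun n hn => ?_⟩
  have hnotin := hN₀ n hn
  have hex : ∃ k, k ∈ Finset.range (m n) ∧ ω ∈ {ω' : S → ℝ | ∀ i ∈ T n k, ω' i ≤ ε} := by
    by_contra h
    push_neg at h
    apply hnotin
    apply Set.mem_iInter₂.mpr
    intro k hk
    exact h k hk
  obtain ⟨k, hkr, hωF⟩ := hex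
  rw [Finset.mem_range] at hkr
  refine ⟨rad n k, ⟨hradlb n k, ?_⟩, ?_⟩
  · have := hradub n k hkr
    have hn0 : (0:ℝ) ≤ (n:ℝ) := Nat.cast_nonneg n
    linarith
  · intro i hi
    have hmem : i ∈ T n k := by
      rw [hTmem]
      exact ⟨hi.1, hi.2⟩
    exact hωF i hmem
end

section
/- Let d ≥ 1, let Σ ⊆ ℝ^d be uniformly discrete with separation r_Σ > 0 and quasi-one-dimensional with constant C, and let (μ_i)_{i∈Σ}, ℙ, p_i(ε) be as in the product-measure setup. Fix ε > 0, set δ := sup_{i∈Σ} p_i(ε), and assume δ < 1. Let a > (1 − δ)^{−C}. For n ∈ ℕ let a_n := ℙ*{ω ∈ Ω : no annulus A_{r,r+n} with r ∈ [a^n, a^{n+1} − n] is ε-free for ω}, where ℙ* denotes outer measure. Then ∑_{n=1}^∞ a_n < ∞. -/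
open MeasureTheory Set
open scoped ENNReal

lemma count_aux {d : ℕ} {S : Set (EuclideanSpace ℝ (Fin d))} {C : ℕ}
    (hfin : ∀ R : ℝ, 0 ≤ R → (S ∩ annulus d R (R + 1)).Finite)
    (hq1D : ∀ R : ℝ, 0 ≤ R → (S ∩ annulus d R (R + 1)).ncard ≤ C) :
    ∀ m : ℕ, ∀ r : ℝ, 0 ≤ r →
      (S ∩ annulus d r (r + ((m : ℝ) + 1))).Finite ∧
      (S ∩ annulus d r (r + ((m : ℝ) + 1))).ncard ≤ C * (m + 1) := by
  intro m
  induction m with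
  | zero =>
    intro r hr
    constructor
    · simpa using hfin r hr
    · simpa using hq1D r hr
  | succ m ih =>
    intro r hr
    push_cast
    have hr' : (0:ℝ) ≤ r + ((m:ℝ) + 1) := by positivity
    have hB := hfin _ hr'
    have hBc := hq1D _ hr'
    have hA := (ih r hr).1
    have hAc := (ih r hr).2
    have hsub : S ∩ annulus d r (r + ((m:ℝ) + 1 + 1)) ⊆
        (S ∩ annulus d r (r + ((m:ℝ) + 1))) ∪
          (S ∩ annulus d (r + ((m:ℝ)+1)) (r + ((m:ℝ)+1) + 1)) := by
      rintro x ⟨hxS, h1, h2⟩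
      by_cases h : ‖x‖ ≤ r + ((m:ℝ)+1)
      · exact Or.inl ⟨hxS, h1, h⟩
      · refine Or.inr ⟨hxS, le_of_not_ge h, ?_⟩
        linarith
    constructor
    · exact Set.Finite.subset (hA.union hB) hsub
    · calc (S ∩ annulus d r (r + ((m:ℝ) + 1 + 1))).ncard
          ≤ ((S ∩ annulus d r (r + ((m:ℝ) + 1))) ∪
            (S ∩ annulus d (r + ((m:ℝ)+1)) (r + ((m:ℝ)+1) + 1))).ncard :=
            Set.ncard_le_ncard hsub (hA.union hB)
        _ ≤ (S ∩ annulus d r (r + ((m:ℝ) + 1))).ncard +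
            (S ∩ annulus d (r + ((m:ℝ)+1)) (r + ((m:ℝ)+1) + 1)).ncard :=
            Set.ncard_union_le _ _
        _ ≤ C * (m + 1) + C := add_le_add hAc hBc
        _ = C * (m + 1 + 1) := by ring

lemma meas_rect {I : Type*} (t : Finset I) (s : I → Set ℝ)
    (hs : ∀ i, MeasurableSet (s i)) :
    MeasurableSet {ω : I → ℝ | ∀ i ∈ t, ω i ∈ s i} := by
  have : {ω : I → ℝ | ∀ i ∈ t, ω i ∈ s i} = ⋂ i ∈ t, (fun ω : I → ℝ => ω i) ⁻¹' (s i) := by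
    ext ω; simp
  rw [this]
  exact MeasurableSet.biInter t.countable_toSet
    (fun i _ => (measurable_pi_apply i) (hs i))

lemma meas_E {I : Type*} (K : ℕ) (t : ℕ → Finset I) (ε : ℝ) :
    MeasurableSet {ω : I → ℝ | ∀ k < K, ∃ i ∈ t k, ε < ω i} := by
  have : {ω : I → ℝ | ∀ k < K, ∃ i ∈ t k, ε < ω i}
      = ⋂ k ∈ Finset.range K, ⋃ i ∈ t k, (fun ω : I → ℝ => ω i) ⁻¹' (Ioi ε) := by
    ext ω; simp
  rw [this]
  exact MeasurableSet.biInter (Finset.range K).countable_toSet (fun k _ =>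
    MeasurableSet.biUnion (t k).countable_toSet
      (fun i _ => (measurable_pi_apply i) measurableSet_Ioi))

lemma key_ind {I : Type*} (μ : I → Measure ℝ) (hprob : ∀ i, IsProbabilityMeasure (μ i))
    (P : Measure (I → ℝ)) (hPprob : IsProbabilityMeasure P)
    (hprod : ∀ (t : Finset I) (s : I → Set ℝ), (∀ i, MeasurableSet (s i)) →
      P {ω | ∀ i ∈ t, ω i ∈ s i} = ∏ i ∈ t, μ i (s i))
    (ε : ℝ) :
    ∀ (K : ℕ) (t : ℕ → Finset I) (t' : Finset I) (s' : I → Set ℝ),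
      (∀ i, MeasurableSet (s' i)) →
      (∀ k < K, ∀ l, l < K → k ≠ l → Disjoint (t k) (t l)) →
      (∀ k < K, Disjoint (t k) t') →
      P ({ω | ∀ k < K, ∃ i ∈ t k, ε < ω i} ∩ {ω | ∀ i ∈ t', ω i ∈ s' i})
        = (∏ k ∈ Finset.range K, (1 - ∏ i ∈ t k, μ i (Iic ε))) * ∏ i ∈ t', μ i (s' i) := by
  classical
  intro K
  induction K with
  | zero =>
    intro t t' s' hs' _ _
    have h1 : {ω : I → ℝ | ∀ k < 0, ∃ i ∈ t k, ε < ω i} = univ := by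
      ext ω; simp
    rw [h1, univ_inter, hprod t' s' hs']
    simp
  | succ K ih =>
    intro t t' s' hs' hd1 hd2
    set s'' : I → Set ℝ := fun i => if i ∈ t K then Iic ε else s' i with hs''def
    have hs'' : ∀ i, MeasurableSet (s'' i) := by
      intro i; simp only [hs''def]; split_ifs
      · exact measurableSet_Iic
      · exact hs' i
    have hdK : Disjoint (t K) t' := hd2 K (Nat.lt_succ_self K)
    have hset : {ω : I → ℝ | ∀ k < K + 1, ∃ i ∈ t k, ε < ω i} ∩ {ω | ∀ i ∈ t', ω i ∈ s' i}
        = ({ω : I → ℝ | ∀ k < K, ∃ i ∈ t k, ε < ω i} ∩ {ω | ∀ i ∈ t', ω i ∈ s' i}) \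
          ({ω : I → ℝ | ∀ k < K, ∃ i ∈ t k, ε < ω i} ∩
            {ω | ∀ i ∈ t K ∪ t', ω i ∈ s'' i}) := by
      ext ω
      simp only [mem_inter_iff, mem_setOf_eq, mem_diff, Finset.mem_union, not_and, not_forall]
      constructor
      · rintro ⟨hE, hR⟩
        have hE' : ∀ k < K, ∃ i ∈ t k, ε < ω i := fun k hk => hE k (hk.trans (Nat.lt_succ_self K))
        obtain ⟨i, hi, hεi⟩ := hE K (Nat.lt_succ_self K)
        refine ⟨⟨hE', hR⟩, fun _ => ⟨i, Or.inl hi, ?_⟩⟩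
        simp only [hs''def, if_pos hi, mem_Iic]
        exact not_le.mpr hεi
      · rintro ⟨⟨hE, hR⟩, hnot⟩
        obtain ⟨i, hi, hbad⟩ := hnot hE
        refine ⟨?_, hR⟩
        intro k hk
        rcases Nat.lt_succ_iff_lt_or_eq.mp hk with h | h
        · exact hE k h
        · rw [h]
          rcases hi with hi | hi
          · refine ⟨i, hi, ?_⟩
            simp only [hs''def, if_pos hi, mem_Iic] at hbad
            exact not_le.mp hbad
          · exfalso
            have hni : i ∉ t K := fun h => (Finset.disjoint_left.mp hdK h) hi
            simp only [hs''def, if_neg hni] at hbad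
            exact hbad (hR i hi)
    have hd1' : ∀ k < K, ∀ l, l < K → k ≠ l → Disjoint (t k) (t l) := fun k hk l hl =>
      hd1 k (hk.trans (Nat.lt_succ_self K)) l (hl.trans (Nat.lt_succ_self K))
    have hd2' : ∀ k < K, Disjoint (t k) t' := fun k hk => hd2 k (hk.trans (Nat.lt_succ_self K))
    have hd2'' : ∀ k < K, Disjoint (t k) (t K ∪ t') := by
      intro k hk
      rw [Finset.disjoint_union_right]
      exact ⟨hd1 k (hk.trans (Nat.lt_succ_self K)) K (Nat.lt_succ_self K) (Nat.ne_of_lt hk),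
        hd2' k hk⟩
    have hIH1 := ih t t' s' hs' hd1' hd2'
    have hIH2 := ih t (t K ∪ t') s'' hs'' hd1' hd2''
    have hprodsplit : ∏ i ∈ t K ∪ t', μ i (s'' i)
        = (∏ i ∈ t K, μ i (Iic ε)) * ∏ i ∈ t', μ i (s' i) := by
      rw [Finset.prod_union hdK]
      congr 1
      · exact Finset.prod_congr rfl fun i hi => by rw [hs''def]; simp [if_pos hi]
      · refine Finset.prod_congr rfl fun i hi => ?_
        have hni : i ∉ t K := fun h => (Finset.disjoint_left.mp hdK h) hi
        rw [hs''def]; simp [if_neg hni]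
    rw [hset]
    have hmeas2 : MeasurableSet ({ω : I → ℝ | ∀ k < K, ∃ i ∈ t k, ε < ω i} ∩
        {ω | ∀ i ∈ t K ∪ t', ω i ∈ s'' i}) :=
      (meas_E K t ε).inter (meas_rect _ _ hs'')
    have hsub2 : ({ω : I → ℝ | ∀ k < K, ∃ i ∈ t k, ε < ω i} ∩
          {ω | ∀ i ∈ t K ∪ t', ω i ∈ s'' i}) ⊆
        ({ω : I → ℝ | ∀ k < K, ∃ i ∈ t k, ε < ω i} ∩ {ω | ∀ i ∈ t', ω i ∈ s' i}) := by
      rintro ω ⟨hE, hR⟩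
      refine ⟨hE, fun i hi => ?_⟩
      have hni : i ∉ t K := fun h => (Finset.disjoint_left.mp hdK h) hi
      have := hR i (Finset.mem_union_right _ hi)
      simpa [hs''def, if_neg hni] using this
    rw [measure_diff hsub2 hmeas2.nullMeasurableSet (measure_ne_top P _), hIH1, hIH2,
      hprodsplit, Finset.prod_range_succ]
    set A := ∏ k ∈ Finset.range K, (1 - ∏ i ∈ t k, μ i (Iic ε)) with hA
    set c := ∏ i ∈ t K, μ i (Iic ε) with hc
    set p := ∏ i ∈ t', μ i (s' i) with hp
    have hAtop : A ≠ ⊤ := by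
      refine ne_top_of_le_ne_top (@ENNReal.one_ne_top) ?_
      rw [hA]
      exact Finset.prod_le_one (fun k _ => zero_le) (fun k _ => tsub_le_self)
    have hptop : p ≠ ⊤ := by
      refine ne_top_of_le_ne_top (@ENNReal.one_ne_top) ?_
      rw [hp]
      exact Finset.prod_le_one (fun i _ => zero_le) (fun i _ => prob_le_one)
    have hx : A * p ≠ ⊤ := ENNReal.mul_ne_top hAtop hptop
    have h5 : A * p - A * (c * p) = (A * p) * (1 - c) := by
      rw [ENNReal.mul_sub (fun _ _ => hx)]
      ring_nf
    rw [h5]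
    ring

lemma bern (x : ℝ) (hx0 : 0 ≤ x) (hx1 : x ≤ 1) (K : ℕ) :
    (1 - x) ^ K * (1 + K * x) ≤ 1 := by
  have h1 : (1:ℝ) + K * x ≤ (1 + x) ^ K := one_add_mul_le_pow (by linarith) K
  have h2 : (1 - x) ^ K * (1 + K * x) ≤ (1 - x) ^ K * (1 + x) ^ K :=
    mul_le_mul_of_nonneg_left h1 (pow_nonneg (by linarith) K)
  have h3 : (1 - x) ^ K * (1 + x) ^ K = (1 - x ^ 2) ^ K := by
    rw [← mul_pow]; ring_nf
  have h4 : (1 - x ^ 2) ^ K ≤ 1 :=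
    pow_le_one₀ (by nlinarith) (by nlinarith)
  linarith

set_option maxHeartbeats 1000000

theorem stmt5 (d : ℕ) (hd : 1 ≤ d) (S : Set (EuclideanSpace ℝ (Fin d)))
    (rSigma : ℝ) (hrSigma : 0 < rSigma)
    (hdisc : ∀ i ∈ S, ∀ j ∈ S, i ≠ j → rSigma ≤ ‖i - j‖)
    (C : ℕ)
    (hfin : ∀ R : ℝ, 0 ≤ R → (S ∩ annulus d R (R + 1)).Finite)
    (hq1D : ∀ R : ℝ, 0 ≤ R → (S ∩ annulus d R (R + 1)).ncard ≤ C)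
    (μ : S → Measure ℝ) (hprob : ∀ i, IsProbabilityMeasure (μ i))
    (hsupp : ∀ i, μ i (Icc (0 : ℝ) 1) = 1)
    (P : Measure (S → ℝ)) (hPprob : IsProbabilityMeasure P)
    (hprod : ∀ (t : Finset S) (s : S → Set ℝ), (∀ i, MeasurableSet (s i)) →
      P {ω | ∀ i ∈ t, ω i ∈ s i} = ∏ i ∈ t, μ i (s i))
    (ε : ℝ) (hε : 0 < ε)
    (δ : ℝ) (hδ0 : 0 ≤ δ) (hδ1 : δ < 1)
    (hδub : ∀ i : S, (μ i (Icc ε 1)).toReal ≤ δ)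
    (a : ℝ) (ha : ((1 - δ) ^ C)⁻¹ < a) :
    ∑' n : ℕ,
        P {ω | ¬ ∃ r ∈ Icc (a ^ (n + 1)) (a ^ (n + 2) - ((n : ℝ) + 1)),
          epsFree S ε ω (annulus d r (r + ((n : ℝ) + 1)))} < ⊤ := by
  classical
  haveI := hPprob
  have hδ1' : (0:ℝ) < 1 - δ := by linarith
  set β : ℝ := (1 - δ) ^ C with hβdef
  have hβ0 : 0 < β := pow_pos hδ1' C
  have hβ1 : β ≤ 1 := pow_le_one₀ (le_of_lt hδ1') (by linarith)
  have hβinv : 1 ≤ β⁻¹ := by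
    have h := inv_pos.mpr hβ0
    nlinarith [mul_inv_cancel₀ (ne_of_gt hβ0)]
  have ha1 : 1 < a := lt_of_le_of_lt hβinv ha
  have ha0 : 0 < a := by linarith
  set θ : ℝ := a * β with hθdef
  have hθ1 : 1 < θ := by
    have h := mul_lt_mul_of_pos_right ha hβ0
    rwa [inv_mul_cancel₀ (ne_of_gt hβ0)] at h
  set s : ℝ := Real.sqrt θ with hsdef
  have hs2 : s ^ 2 = θ := Real.sq_sqrt (by linarith)
  have hs0 : 0 ≤ s := Real.sqrt_nonneg θ
  have hs1 : 1 < s := by nlinarith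
  have hsθ : s < θ := by nlinarith
  -- per-coordinate bound
  set q : ℝ≥0∞ := ENNReal.ofReal (1 - δ) with hqdef
  have hq1 : q ≤ 1 := by
    rw [hqdef, ← ENNReal.ofReal_one]
    exact ENNReal.ofReal_le_ofReal (by linarith)
  have hμIic : ∀ i : S, q ≤ μ i (Iic ε) := by
    intro i
    haveI := hprob i
    have hle : μ i (Icc ε 1) ≤ ENNReal.ofReal δ :=
      (ENNReal.le_ofReal_iff_toReal_le (measure_ne_top _ _) hδ0).mpr (hδub i)
    have hcover : (1:ℝ≥0∞) ≤ μ i (Iic ε) + μ i (Icc ε 1) := by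
      rw [← hsupp i]
      refine le_trans (measure_mono ?_) (measure_union_le _ _)
      intro x hx
      rcases le_total x ε with h | h
      · exact Or.inl h
      · exact Or.inr ⟨h, hx.2⟩
    calc q = 1 - ENNReal.ofReal δ := by
          rw [hqdef, ENNReal.ofReal_sub 1 hδ0, ENNReal.ofReal_one]
      _ ≤ 1 - μ i (Icc ε 1) := tsub_le_tsub_left hle 1
      _ ≤ μ i (Iic ε) := by
          rw [tsub_le_iff_right]
          exact le_trans hcover (by rw [add_comm])
  -- definitions
  set y : ℕ → ℝ := fun n => (a ^ (n+2) - a ^ (n+1) - ((n:ℝ)+1)) / ((n:ℝ)+2) with hydef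
  set K : ℕ → ℕ := fun n => ⌊y n⌋₊ with hKdef
  set rr : ℕ → ℕ → ℝ := fun n k => a ^ (n+1) + (k:ℝ) * ((n:ℝ)+2) with hrrdef
  have hrr0 : ∀ n k, 0 ≤ rr n k := by
    intro n k
    have : (0:ℝ) < a ^ (n+1) := pow_pos ha0 _
    have : (0:ℝ) ≤ (k:ℝ) * ((n:ℝ)+2) := by positivity
    simp only [hrrdef]
    linarith
  have hTfin : ∀ n k : ℕ,
      ({i : S | (i : EuclideanSpace ℝ (Fin d)) ∈
        annulus d (rr n k) (rr n k + ((n:ℝ)+1))} : Set S).Finite := by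
    intro n k
    have h := (count_aux hfin hq1D n (rr n k) (hrr0 n k)).1
    have heq : ({i : S | (i : EuclideanSpace ℝ (Fin d)) ∈
        annulus d (rr n k) (rr n k + ((n:ℝ)+1))} : Set S)
        = Subtype.val ⁻¹' (S ∩ annulus d (rr n k) (rr n k + ((n:ℝ)+1))) := by
      ext i
      simp [i.2]
    rw [heq]
    exact h.preimage Subtype.val_injective.injOn
  set T : ℕ → ℕ → Finset S := fun n k => (hTfin n k).toFinset with hTdef
  have hmemT : ∀ n k (i : S), i ∈ T n k ↔
      (i : EuclideanSpace ℝ (Fin d)) ∈ annulus d (rr n k) (rr n k + ((n:ℝ)+1)) := by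
    intro n k i
    simp [hTdef, Set.Finite.mem_toFinset]
  have hTcard : ∀ n k, (T n k).card ≤ C * (n + 1) := by
    intro n k
    have himg : Subtype.val '' ({i : S | (i : EuclideanSpace ℝ (Fin d)) ∈
        annulus d (rr n k) (rr n k + ((n:ℝ)+1))} : Set S)
        = S ∩ annulus d (rr n k) (rr n k + ((n:ℝ)+1)) := by
      ext x
      constructor
      · rintro ⟨i, hi, rfl⟩; exact ⟨i.2, hi⟩
      · rintro ⟨hxS, hx⟩; exact ⟨⟨x, hxS⟩, hx, rfl⟩
    have h1 : (T n k).card = ({i : S | (i : EuclideanSpace ℝ (Fin d)) ∈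
        annulus d (rr n k) (rr n k + ((n:ℝ)+1))} : Set S).ncard :=
      (Set.ncard_eq_toFinset_card _ (hTfin n k)).symm
    rw [h1, ← Set.ncard_image_of_injective _ Subtype.val_injective, himg]
    exact (count_aux hfin hq1D n (rr n k) (hrr0 n k)).2
  have hTdisj : ∀ n k l, k ≠ l → Disjoint (T n k) (T n l) := by
    have hlt : ∀ n k l, k < l → Disjoint (T n k) (T n l) := by
      intro n k l hkl
      rw [Finset.disjoint_left]
      intro i hik hil
      rw [hmemT] at hik hil
      have h1 : ‖(i : EuclideanSpace ℝ (Fin d))‖ ≤ rr n k + ((n:ℝ)+1) := hik.2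
      have h2 : rr n l ≤ ‖(i : EuclideanSpace ℝ (Fin d))‖ := hil.1
      have h3 : (k:ℝ) + 1 ≤ (l:ℝ) := by exact_mod_cast hkl
      have h4 : ((k:ℝ)+1) * ((n:ℝ)+2) ≤ (l:ℝ) * ((n:ℝ)+2) :=
        mul_le_mul_of_nonneg_right h3 (by positivity)
      simp only [hrrdef] at h1 h2
      nlinarith
    intro n k l hkl
    rcases lt_or_gt_of_ne hkl with h | h
    · exact hlt n k l h
    · exact (hlt n l k h).symm
  -- event inclusion
  have hBad : ∀ n : ℕ, {ω : S → ℝ | ¬ ∃ r ∈ Icc (a ^ (n + 1)) (a ^ (n + 2) - ((n : ℝ) + 1)),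
          epsFree S ε ω (annulus d r (r + ((n : ℝ) + 1)))} ⊆
        {ω : S → ℝ | ∀ k < K n, ∃ i ∈ T n k, ε < ω i} := by
    intro n ω hω k hk
    have hy0 : 0 ≤ y n := by
      by_contra hy
      push_neg at hy
      have h0 : K n = 0 := by
        simp only [hKdef]
        exact Nat.floor_eq_zero.mpr (by linarith)
      omega
    have hk' : (k:ℝ) ≤ y n := by
      have h1 : (k:ℝ) < (⌊y n⌋₊ : ℝ) := by exact_mod_cast hk
      exact le_of_lt (lt_of_lt_of_le h1 (Nat.floor_le hy0))
    have hupper : rr n k ≤ a ^ (n + 2) - ((n:ℝ) + 1) := by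
      have h4 : (k:ℝ) * ((n:ℝ)+2) ≤ y n * ((n:ℝ)+2) :=
        mul_le_mul_of_nonneg_right hk' (by positivity)
      have h5 : y n * ((n:ℝ)+2) = a ^ (n+2) - a ^ (n+1) - ((n:ℝ)+1) := by
        rw [hydef]
        field_simp
      simp only [hrrdef]
      linarith
    have hlower : a ^ (n + 1) ≤ rr n k := by
      simp only [hrrdef]
      have : (0:ℝ) ≤ (k:ℝ) * ((n:ℝ)+2) := by positivity
      linarith
    by_contra hcon
    push_neg at hcon
    refine hω ⟨rr n k, ⟨hlower, hupper⟩, ?_⟩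
    intro i hi
    have hiT : i ∈ T n k := (hmemT n k i).mpr hi
    exact hcon i hiT
    -- main measure bound
  have hmain : ∀ n : ℕ, P {ω : S → ℝ | ¬ ∃ r ∈ Icc (a ^ (n + 1)) (a ^ (n + 2) - ((n : ℝ) + 1)),
          epsFree S ε ω (annulus d r (r + ((n : ℝ) + 1)))}
        ≤ (1 - q ^ (C * (n+1))) ^ (K n) := by
    intro n
    have hkey := key_ind μ hprob P hPprob hprod ε (K n) (T n) ∅ (fun _ => univ)
      (fun _ => MeasurableSet.univ) (fun k _ l _ hkl => hTdisj n k l hkl)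
      (fun k _ => Finset.disjoint_empty_right _)
    have hkey' : P {ω : S → ℝ | ∀ k < K n, ∃ i ∈ T n k, ε < ω i}
        = ∏ k ∈ Finset.range (K n), (1 - ∏ i ∈ T n k, μ i (Iic ε)) := by
      simpa using hkey
    calc P {ω : S → ℝ | ¬ ∃ r ∈ Icc (a ^ (n + 1)) (a ^ (n + 2) - ((n : ℝ) + 1)),
          epsFree S ε ω (annulus d r (r + ((n : ℝ) + 1)))}
        ≤ P {ω : S → ℝ | ∀ k < K n, ∃ i ∈ T n k, ε < ω i} := measure_mono (hBad n)
      _ = ∏ k ∈ Finset.range (K n), (1 - ∏ i ∈ T n k, μ i (Iic ε)) := hkey'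
      _ ≤ ∏ k ∈ Finset.range (K n), (1 - q ^ (C * (n+1))) := by
          refine Finset.prod_le_prod' (fun k _ => tsub_le_tsub_left ?_ 1)
          calc q ^ (C * (n+1)) ≤ q ^ (T n k).card :=
              pow_le_pow_of_le_one zero_le hq1 (hTcard n k)
            _ = ∏ _i ∈ T n k, q := by rw [Finset.prod_const]
            _ ≤ ∏ i ∈ T n k, μ i (Iic ε) := Finset.prod_le_prod' (fun i _ => hμIic i)
      _ = (1 - q ^ (C * (n+1))) ^ (K n) := by rw [Finset.prod_const, Finset.card_range]
  have hβn1 : ∀ n : ℕ, 0 < β ^ (n+1) := fun n => pow_pos hβ0 _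
  have hβn2 : ∀ n : ℕ, β ^ (n+1) ≤ 1 := fun n => pow_le_one₀ hβ0.le hβ1
  have hconv : ∀ n : ℕ, ((1 : ℝ≥0∞) - q ^ (C * (n+1))) ^ (K n)
      = ENNReal.ofReal ((1 - β ^ (n+1)) ^ (K n)) := by
    intro n
    have h0 : (1 - δ) ^ (C * (n+1)) = β ^ (n+1) := by
      rw [hβdef, ← pow_mul]
    have h1 : q ^ (C * (n+1)) = ENNReal.ofReal (β ^ (n+1)) := by
      rw [hqdef, ← ENNReal.ofReal_pow (le_of_lt hδ1'), h0]
    rw [h1, ← ENNReal.ofReal_one, ← ENNReal.ofReal_sub 1 (pow_nonneg hβ0.le _),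
      ← ENNReal.ofReal_pow (by nlinarith [hβn2 n])]
  -- growth
  have hθ0 : (0:ℝ) < θ := by linarith
  have hr0 : (0:ℝ) ≤ s / θ := by positivity
  have hr1 : s / θ < 1 := (div_lt_one hθ0).mpr hsθ
  have ht0 : Filter.Tendsto (fun n : ℕ => ((n:ℝ)+1) * (s/θ)^n) Filter.atTop (nhds 0) := by
    have hsum1 : Summable (fun n : ℕ => (n:ℝ)^1 * (s/θ)^n) :=
      summable_pow_mul_geometric_of_norm_lt_one 1
        (by rwa [Real.norm_eq_abs, abs_of_nonneg hr0])
    have h1 := hsum1.tendsto_atTop_zero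
    have h2 := tendsto_pow_atTop_nhds_zero_of_lt_one hr0 hr1
    have h3 := h1.add h2
    rw [add_zero] at h3
    exact h3.congr (fun n => by ring)
  have hgrow : ∀ᶠ n in Filter.atTop, s ^ n ≤ (K n : ℝ) * β ^ (n+1) := by
    have hc : (0:ℝ) < (a-1) * θ / 5 :=
      div_pos (mul_pos (by linarith) hθ0) (by norm_num)
    filter_upwards [ht0.eventually_le_const hc] with n hn
    have hy1 : y n - 1 < (K n : ℝ) := by
      have h := Nat.sub_one_lt_floor (y n)
      simpa [hKdef] using h
    have hKx : (y n - 1) * β ^ (n+1) ≤ (K n : ℝ) * β ^ (n+1) :=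
      mul_le_mul_of_nonneg_right hy1.le (pow_nonneg hβ0.le _)
    refine le_trans ?_ hKx
    have hn2 : (0:ℝ) < (n:ℝ) + 2 := by positivity
    have hθn : (0:ℝ) < θ ^ n := pow_pos hθ0 n
    have hθne : θ ^ n ≠ 0 := ne_of_gt hθn
    have hsnpos : (0:ℝ) < s ^ n := pow_pos (by linarith) n
    have hsn1 : (1:ℝ) ≤ s ^ n := one_le_pow₀ hs1.le
    have h5 : 5 * ((n:ℝ)+1) * s ^ n ≤ (a-1) * θ ^ (n+1) := by
      have hmul := mul_le_mul_of_nonneg_right hn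
        (le_of_lt (by positivity : (0:ℝ) < 5 * θ ^ n))
      calc 5 * ((n:ℝ)+1) * s ^ n
          = (((n:ℝ)+1) * (s/θ)^n) * (5 * θ ^ n) := by
            rw [div_pow]; field_simp
        _ ≤ ((a-1) * θ / 5) * (5 * θ ^ n) := hmul
        _ = (a-1) * θ ^ (n+1) := by field_simp; ring
    have hy_eq : y n = (a ^ (n+2) - a ^ (n+1) - ((n:ℝ)+1)) / ((n:ℝ)+2) := rfl
    have hyval : (y n - 1) * β ^ (n+1)
        = ((a ^ (n+2) - a ^ (n+1) - (2*(n:ℝ)+3)) / ((n:ℝ)+2)) * β ^ (n+1) := by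
      rw [hy_eq]
      field_simp
      ring
    rw [hyval, div_mul_eq_mul_div, le_div_iff₀ hn2]
    have hD : (a ^ (n+2) - a ^ (n+1) - (2*(n:ℝ)+3)) * β ^ (n+1)
        = (a-1) * θ ^ (n+1) - (2*(n:ℝ)+3) * β ^ (n+1) := by
      simp only [hθdef, mul_pow]
      ring
    rw [hD]
    have hb3 : (2*(n:ℝ)+3) * β ^ (n+1) ≤ (2*(n:ℝ)+3) * 1 :=
      mul_le_mul_of_nonneg_left (hβn2 n) (by positivity)
    have hs3 : (2*(n:ℝ)+3) * 1 ≤ (2*(n:ℝ)+3) * s ^ n :=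
      mul_le_mul_of_nonneg_left hsn1 (by positivity)
    nlinarith [hsnpos, hsn1]
  -- eventual bound
  have hfinal : ∀ᶠ n : ℕ in Filter.atTop,
      P {ω : S → ℝ | ¬ ∃ r ∈ Icc (a ^ (n + 1)) (a ^ (n + 2) - ((n : ℝ) + 1)),
          epsFree S ε ω (annulus d r (r + ((n : ℝ) + 1)))} ≤ ENNReal.ofReal (s⁻¹ ^ n) := by
    filter_upwards [hgrow] with n hn
    refine le_trans (hmain n) ?_
    rw [hconv n]
    refine ENNReal.ofReal_le_ofReal ?_
    have hx0 : (0:ℝ) < β ^ (n+1) := hβn1 n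
    have hx1 : β ^ (n+1) ≤ 1 := hβn2 n
    have hb := bern (β ^ (n+1)) hx0.le hx1 (K n)
    have hp0 : (0:ℝ) ≤ (1 - β ^ (n+1)) ^ (K n) := pow_nonneg (by linarith) _
    have hsnpos : (0:ℝ) < s ^ n := pow_pos (by linarith) n
    have h2 : (1 - β ^ (n+1)) ^ (K n) * s ^ n ≤ 1 := by
      have h3 : (K n : ℝ) * β ^ (n+1) ≤ 1 + (K n : ℝ) * β ^ (n+1) := by linarith
      have h4 := mul_le_mul_of_nonneg_left (le_trans hn h3) hp0
      linarith
    rw [inv_pow]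
    calc (1 - β ^ (n+1)) ^ (K n)
        = (1 - β ^ (n+1)) ^ (K n) * s ^ n / s ^ n := by field_simp
      _ ≤ 1 / s ^ n := by gcongr
      _ = (s ^ n)⁻¹ := one_div _
  obtain ⟨N, hN⟩ := Filter.eventually_atTop.mp hfinal
  obtain ⟨F, hF⟩ : ∃ F : ℕ → ℝ≥0∞, F = (fun n : ℕ =>
      P {ω : S → ℝ | ¬ ∃ r ∈ Icc (a ^ (n + 1)) (a ^ (n + 2) - ((n : ℝ) + 1)),
        epsFree S ε ω (annulus d r (r + ((n : ℝ) + 1)))}) := ⟨_, rfl⟩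
  have hFle : ∀ n, N ≤ n → F n ≤ ENNReal.ofReal (s⁻¹ ^ n) := by
    intro n hn; rw [hF]; exact hN n hn
  have hFlt : ∀ n, F n < ⊤ := by
    intro n; rw [hF]; exact measure_lt_top P _
  have hgoal : ∑' n : ℕ, F n < ⊤ := by
    set g : ℕ → ℝ≥0∞ := fun n => if n < N then F n else 0 with hg
    set h : ℕ → ℝ≥0∞ := fun n => ENNReal.ofReal (s⁻¹ ^ n) with hh
    have hle : ∀ n, F n ≤ g n + h n := by
      intro n
      by_cases hn : n < N
      · simp only [hg, hh, if_pos hn]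
        exact le_self_add
      · simp only [hg, hh, if_neg hn]
        rw [zero_add]
        exact hFle n (le_of_not_gt hn)
    refine lt_of_le_of_lt (ENNReal.tsum_le_tsum hle) ?_
    rw [ENNReal.tsum_add]
    refine ENNReal.add_lt_top.mpr ⟨?_, ?_⟩
    · have hzero : ∀ n ∉ Finset.range N, g n = 0 := by
        intro n hn
        simp only [Finset.mem_range, not_lt] at hn
        simp only [hg, if_neg (Nat.not_lt.mpr hn)]
      rw [tsum_eq_sum hzero, ENNReal.sum_lt_top]
      intro i _
      simp only [hg]
      split_ifs
      · exact hFlt i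
      · exact ENNReal.zero_lt_top
    · refine lt_of_le_of_lt (ENNReal.tsum_le_tsum (fun i => ?_))
        (?_ : ∑' (i:ℕ), (ENNReal.ofReal s⁻¹) ^ i < ⊤)
      · simp only [hh]
        rw [ENNReal.ofReal_pow (inv_nonneg.mpr (by linarith))]
      · rw [ENNReal.tsum_geometric]
        exact ENNReal.inv_lt_top.mpr
          (tsub_pos_of_lt (ENNReal.ofReal_lt_one.mpr (inv_lt_one_of_one_lt₀ hs1)))
  rw [hF] at hgoal
  exact hgoal
end

section
/- Let d ≥ 1, let Σ ⊆ ℝ^d be uniformly discrete with separation r_Σ > 0, and let (μ_i)_{i∈Σ} and ℙ be as in the product-measure setup. For each i ∈ Σ let f_i : ℝ^d → ℝ be measurable with |f_i| ≤ M and f_i = 0 outside the closed ball B(0, ρ), for constants M < ∞ and ρ > 0. Suppose β > 0 and C < ∞ are such that the second moments satisfy ∫ t² dμ_i(t) ≤ C·(1 + ‖i‖)^{−β} for all i ∈ Σ. Then there exists C' < ∞ such that for every x ∈ ℝ^d, ∫_Ω ( ∑_{i∈Σ} ω_i·f_i(x − i) )² dℙ(ω) ≤ C'·(1 + ‖x‖)^{−β}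 (the sum has at most finitely many nonzero terms for each fixed x). -/
open MeasureTheory Set

theorem stmt17 (d : ℕ) (hd : 1 ≤ d) (S : Set (EuclideanSpace ℝ (Fin d)))
    (rSigma : ℝ) (hrSigma : 0 < rSigma)
    (hdisc : ∀ i ∈ S, ∀ j ∈ S, i ≠ j → rSigma ≤ ‖i - j‖)
    (μ : S → Measure ℝ) (hprob : ∀ i, IsProbabilityMeasure (μ i))
    (hsupp01 : ∀ i, μ i (Icc (0 : ℝ) 1) = 1)
    (P : Measure (S → ℝ)) (hPprob : IsProbabilityMeasure P)
    (hprod : ∀ (t : Finset S) (s : S → Set ℝ), (∀ i, MeasurableSet (s i)) →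
      P {ω | ∀ i ∈ t, ω i ∈ s i} = ∏ i ∈ t, μ i (s i))
    (f : S → EuclideanSpace ℝ (Fin d) → ℝ) (M ρ : ℝ) (hρ : 0 < ρ)
    (hmeas : ∀ i, Measurable (f i))
    (hM : ∀ i x, |f i x| ≤ M)
    (hsupp : ∀ (i : S) (x : EuclideanSpace ℝ (Fin d)),
      x ∉ Metric.closedBall 0 ρ → f i x = 0)
    (β C : ℝ) (hβ : 0 < β)
    (hmom : ∀ i : S, ∫ t, t ^ 2 ∂(μ i) ≤
      C * (1 + ‖(i : EuclideanSpace ℝ (Fin d))‖) ^ (-β)) :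
    ∃ C' : ℝ, ∀ x : EuclideanSpace ℝ (Fin d),
      ∫ ω, (∑' i : S, ω i * f i (x - (i : EuclideanSpace ℝ (Fin d)))) ^ 2 ∂P ≤
        C' * (1 + ‖x‖) ^ (-β) := by
  classical
  -- a finite r/3-net of the closed ball of radius ρ
  obtain ⟨t₀, ht₀fin, ht₀cov⟩ :=
    Metric.totallyBounded_iff.mp
      (isCompact_closedBall (0 : EuclideanSpace ℝ (Fin d)) ρ).totallyBounded (rSigma / 3) (by positivity)
  set N₀ : ℕ := t₀.ncard with hN₀
  -- choice of a net point near each point of the ball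
  let y : EuclideanSpace ℝ (Fin d) → EuclideanSpace ℝ (Fin d) := fun z =>
    if h : ∃ w ∈ t₀, z ∈ Metric.ball w (rSigma / 3) then h.choose else 0
  have hy : ∀ z ∈ Metric.closedBall (0 : EuclideanSpace ℝ (Fin d)) ρ,
      y z ∈ t₀ ∧ z ∈ Metric.ball (y z) (rSigma / 3) := by
    intro z hz
    have h : ∃ w ∈ t₀, z ∈ Metric.ball w (rSigma / 3) := by
      have := ht₀cov hz
      simpa using this
    simp only [y, dif_pos h]
    exact ⟨h.choose_spec.1, h.choose_spec.2⟩
  -- the marginal of P at i is μ i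
  have hmap : ∀ i : S, Measure.map (fun ω : S → ℝ => ω i) P = μ i := by
    intro i
    ext u hu
    rw [Measure.map_apply (measurable_pi_apply i) hu]
    have := hprod {i} (fun _ => u) (fun _ => hu)
    simp at this; exact this
  -- the coordinates lie a.e. in [0,1]
  have hae : ∀ i : S, ∀ᵐ ω ∂P, ω i ∈ Icc (0 : ℝ) 1 := by
    intro i
    have hms : MeasurableSet ((fun ω : S → ℝ => ω i) ⁻¹' Icc (0 : ℝ) 1) :=
      (measurable_pi_apply i) measurableSet_Icc
    have h1 : P ((fun ω : S → ℝ => ω i) ⁻¹' Icc (0 : ℝ) 1) = 1 := by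
      rw [← Measure.map_apply (measurable_pi_apply i) measurableSet_Icc, hmap i, hsupp01 i]
    have h0 : P ((fun ω : S → ℝ => ω i) ⁻¹' Icc (0 : ℝ) 1)ᶜ = 0 := by
      rw [measure_compl hms (measure_ne_top _ _), h1, measure_univ, tsub_self]
    rw [ae_iff]
    convert h0 using 2
    rfl
  -- integrability of squared coordinates
  have hint : ∀ i : S, Integrable (fun ω : S → ℝ => (ω i) ^ 2) P := by
    intro i
    refine Integrable.mono' (integrable_const 1)
      ((measurable_pi_apply i).pow_const 2).aestronglyMeasurable ?_
    filter_upwards [hae i] with ω hω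
    rw [Real.norm_eq_abs, abs_of_nonneg (sq_nonneg _)]
    nlinarith [hω.1, hω.2]
  -- second moments
  have hInt2 : ∀ i : S, ∫ ω, (ω i) ^ 2 ∂P = ∫ t, t ^ 2 ∂(μ i) := by
    intro i
    have hg : AEStronglyMeasurable (fun t : ℝ => t ^ 2)
        (Measure.map (fun ω : S → ℝ => ω i) P) :=
      (continuous_pow 2).measurable.aestronglyMeasurable
    rw [← hmap i]
    exact (integral_map (φ := fun ω : S → ℝ => ω i) (μ := P) (measurable_pi_apply i).aemeasurable hg).symm
  refine ⟨(N₀ : ℝ) * ((N₀ : ℝ) * (M ^ 2 * (max C 0 * (1 + ρ) ^ β))), ?_⟩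
  intro x
  -- the set of sites that can contribute at x
  set A : Set S := {i : S | ‖x - (i : EuclideanSpace ℝ (Fin d))‖ ≤ ρ} with hA
  have hmemB : ∀ i ∈ A, (x - (i : EuclideanSpace ℝ (Fin d))) ∈ Metric.closedBall (0 : EuclideanSpace ℝ (Fin d)) ρ := by
    intro i hi
    rw [mem_closedBall_zero_iff]
    exact hi
  have hinj : A.InjOn (fun i : S => y (x - (i : EuclideanSpace ℝ (Fin d)))) := by
    intro i hi j hj hij
    by_contra hne
    have hdi := (hy _ (hmemB i hi)).2
    have hdj := (hy _ (hmemB j hj)).2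
    have h1 : dist (x - (i : EuclideanSpace ℝ (Fin d))) (y (x - (i : EuclideanSpace ℝ (Fin d)))) < rSigma / 3 := Metric.mem_ball.mp hdi
    have h2 : dist (x - (j : EuclideanSpace ℝ (Fin d))) (y (x - (j : EuclideanSpace ℝ (Fin d)))) < rSigma / 3 := Metric.mem_ball.mp hdj
    simp only at hij
    rw [hij] at h1
    have h3 : dist (x - (i : EuclideanSpace ℝ (Fin d))) (x - (j : EuclideanSpace ℝ (Fin d))) < rSigma := by
      calc dist (x - (i : EuclideanSpace ℝ (Fin d))) (x - (j : EuclideanSpace ℝ (Fin d)))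
          ≤ dist (x - (i : EuclideanSpace ℝ (Fin d))) (y (x - (j : EuclideanSpace ℝ (Fin d)))) + dist (x - (j : EuclideanSpace ℝ (Fin d))) (y (x - (j : EuclideanSpace ℝ (Fin d)))) :=
            dist_triangle_right _ _ _
        _ < rSigma / 3 + rSigma / 3 := add_lt_add h1 h2
        _ ≤ rSigma := by linarith
    have h4 : dist (x - (i : EuclideanSpace ℝ (Fin d))) (x - (j : EuclideanSpace ℝ (Fin d))) = ‖(i : EuclideanSpace ℝ (Fin d)) - (j : EuclideanSpace ℝ (Fin d))‖ := by
      rw [dist_sub_left, dist_eq_norm]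
    have hcne : (i : EuclideanSpace ℝ (Fin d)) ≠ (j : EuclideanSpace ℝ (Fin d)) := fun h => hne (Subtype.ext h)
    have := hdisc i i.2 j j.2 hcne
    rw [h4] at h3
    linarith
  have hAt₀ : ∀ i ∈ A, y (x - (i : EuclideanSpace ℝ (Fin d))) ∈ t₀ := fun i hi => (hy _ (hmemB i hi)).1
  have hAfin : A.Finite := by
    refine Set.Finite.of_finite_image (ht₀fin.subset ?_) hinj
    rintro _ ⟨i, hi, rfl⟩
    exact hAt₀ i hi
  have hcard : A.ncard ≤ N₀ := Set.ncard_le_ncard_of_injOn _ hAt₀ hinj ht₀fin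
  set T : Finset S := hAfin.toFinset with hT
  have hTmem : ∀ i : S, i ∈ T ↔ ‖x - (i : EuclideanSpace ℝ (Fin d))‖ ≤ ρ := fun i => hAfin.mem_toFinset
  have hTcard : (T.card : ℝ) ≤ (N₀ : ℝ) := by
    have : T.card = A.ncard := (Set.ncard_eq_toFinset_card A hAfin).symm
    exact_mod_cast this ▸ Nat.cast_le.mpr hcard
  -- the tsum is a finite sum
  have hts : ∀ ω : S → ℝ,
      (∑' i : S, ω i * f i (x - (i : EuclideanSpace ℝ (Fin d)))) = ∑ i ∈ T, ω i * f i (x - (i : EuclideanSpace ℝ (Fin d))) := by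
    intro ω
    refine tsum_eq_sum ?_
    intro i hi
    have hz : f i (x - (i : EuclideanSpace ℝ (Fin d))) = 0 := by
      refine hsupp i _ ?_
      rw [mem_closedBall_zero_iff]
      intro h
      exact hi ((hTmem i).mpr h)
    rw [hz, mul_zero]
  have hfun : (fun ω : S → ℝ => (∑' i : S, ω i * f i (x - (i : EuclideanSpace ℝ (Fin d)))) ^ 2)
      = fun ω : S → ℝ => (∑ i ∈ T, ω i * f i (x - (i : EuclideanSpace ℝ (Fin d)))) ^ 2 := by
    funext ω; rw [hts ω]
  -- the key decay inequality
  have hkey : ∀ i ∈ T, (1 + ‖(i : EuclideanSpace ℝ (Fin d))‖) ^ (-β) ≤ (1 + ρ) ^ β * (1 + ‖x‖) ^ (-β) := by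
    intro i hi
    have h2 : (0 : ℝ) < 1 + ‖(i : EuclideanSpace ℝ (Fin d))‖ := by positivity
    have h3 : (0 : ℝ) < 1 + ρ := by linarith
    have hx1 : (0 : ℝ) < 1 + ‖x‖ := by positivity
    have hxi : ‖x‖ ≤ ρ + ‖(i : EuclideanSpace ℝ (Fin d))‖ := by
      have h5 : ‖x - (i : EuclideanSpace ℝ (Fin d))‖ ≤ ρ := (hTmem i).mp hi
      have := norm_sub_norm_le (x) ((i : EuclideanSpace ℝ (Fin d)))
      linarith
    have hle : 1 + ‖x‖ ≤ (1 + ‖(i : EuclideanSpace ℝ (Fin d))‖) * (1 + ρ) := by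
      have := norm_nonneg (i : EuclideanSpace ℝ (Fin d))
      nlinarith
    have hstep : ((1 + ‖(i : EuclideanSpace ℝ (Fin d))‖) * (1 + ρ)) ^ (-β) ≤ (1 + ‖x‖) ^ (-β) :=
      Real.rpow_le_rpow_of_nonpos hx1 hle (neg_nonpos.mpr hβ.le)
    rw [Real.mul_rpow h2.le h3.le] at hstep
    have hone : (1 + ρ) ^ β * (1 + ρ) ^ (-β) = 1 := by
      rw [← Real.rpow_add h3, add_neg_cancel, Real.rpow_zero]
    calc (1 + ‖(i : EuclideanSpace ℝ (Fin d))‖) ^ (-β)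
        = (1 + ρ) ^ β * ((1 + ‖(i : EuclideanSpace ℝ (Fin d))‖) ^ (-β) * (1 + ρ) ^ (-β)) := by
          rw [← mul_assoc, mul_comm ((1 + ρ) ^ β), mul_assoc, hone, mul_one]
      _ ≤ (1 + ρ) ^ β * (1 + ‖x‖) ^ (-β) :=
          mul_le_mul_of_nonneg_left hstep (Real.rpow_nonneg h3.le _)
  have hxpos : (0 : ℝ) ≤ (1 + ‖x‖) ^ (-β) := Real.rpow_nonneg (by positivity) _
  have hρpos : (0 : ℝ) ≤ (1 + ρ) ^ β := Real.rpow_nonneg (by linarith) _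
  -- dominating integrand
  have hdomInt : Integrable
      (fun ω : S → ℝ => (N₀ : ℝ) * ∑ i ∈ T, M ^ 2 * (ω i) ^ 2) P :=
    (integrable_finset_sum T fun i _ => (hint i).const_mul _).const_mul _
  have hpt : ∀ ω : S → ℝ, (∑ i ∈ T, ω i * f i (x - (i : EuclideanSpace ℝ (Fin d)))) ^ 2
      ≤ (N₀ : ℝ) * ∑ i ∈ T, M ^ 2 * (ω i) ^ 2 := by
    intro ω
    have hCS := sq_sum_le_card_mul_sum_sq (s := T) (f := fun i => ω i * f i (x - (i : EuclideanSpace ℝ (Fin d))))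
    have hsum : ∑ i ∈ T, (ω i * f i (x - (i : EuclideanSpace ℝ (Fin d)))) ^ 2 ≤ ∑ i ∈ T, M ^ 2 * (ω i) ^ 2 := by
      refine Finset.sum_le_sum ?_
      intro i _
      have hc : (f i (x - (i : EuclideanSpace ℝ (Fin d)))) ^ 2 ≤ M ^ 2 :=
        sq_le_sq' (abs_le.mp (hM i _)).1 (abs_le.mp (hM i _)).2
      calc (ω i * f i (x - (i : EuclideanSpace ℝ (Fin d)))) ^ 2 = (ω i) ^ 2 * (f i (x - (i : EuclideanSpace ℝ (Fin d)))) ^ 2 := by ring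
        _ ≤ (ω i) ^ 2 * M ^ 2 := mul_le_mul_of_nonneg_left hc (sq_nonneg _)
        _ = M ^ 2 * (ω i) ^ 2 := by ring
    have hsnn : (0 : ℝ) ≤ ∑ i ∈ T, M ^ 2 * (ω i) ^ 2 :=
      Finset.sum_nonneg fun i _ => mul_nonneg (sq_nonneg _) (sq_nonneg _)
    calc (∑ i ∈ T, ω i * f i (x - (i : EuclideanSpace ℝ (Fin d)))) ^ 2
        ≤ (T.card : ℝ) * ∑ i ∈ T, (ω i * f i (x - (i : EuclideanSpace ℝ (Fin d)))) ^ 2 := hCS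
      _ ≤ (T.card : ℝ) * ∑ i ∈ T, M ^ 2 * (ω i) ^ 2 :=
          mul_le_mul_of_nonneg_left hsum (by positivity)
      _ ≤ (N₀ : ℝ) * ∑ i ∈ T, M ^ 2 * (ω i) ^ 2 :=
          mul_le_mul_of_nonneg_right hTcard hsnn
  rw [hfun]
  calc ∫ ω, (∑ i ∈ T, ω i * f i (x - (i : EuclideanSpace ℝ (Fin d)))) ^ 2 ∂P
      ≤ ∫ ω, (N₀ : ℝ) * ∑ i ∈ T, M ^ 2 * (ω i) ^ 2 ∂P :=
        integral_mono_of_nonneg (ae_of_all _ fun ω => sq_nonneg _) hdomInt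
          (ae_of_all _ hpt)
    _ = (N₀ : ℝ) * ∑ i ∈ T, M ^ 2 * ∫ ω, (ω i) ^ 2 ∂P := by
        rw [integral_const_mul]
        congr 1
        rw [integral_finset_sum _ (fun i _ => (hint i).const_mul _)]
        exact Finset.sum_congr rfl fun i _ => integral_const_mul _ _
    _ ≤ (N₀ : ℝ) * ∑ i ∈ T, M ^ 2 * (max C 0 * ((1 + ρ) ^ β * (1 + ‖x‖) ^ (-β))) := by
        refine mul_le_mul_of_nonneg_left (Finset.sum_le_sum ?_) (Nat.cast_nonneg _)
        intro i hi
        refine mul_le_mul_of_nonneg_left ?_ (sq_nonneg _)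
        have h1 : ∫ ω, (ω i) ^ 2 ∂P ≤ C * (1 + ‖(i : EuclideanSpace ℝ (Fin d))‖) ^ (-β) := by
          rw [hInt2 i]; exact hmom i
        have h2 : C * (1 + ‖(i : EuclideanSpace ℝ (Fin d))‖) ^ (-β) ≤ max C 0 * (1 + ‖(i : EuclideanSpace ℝ (Fin d))‖) ^ (-β) :=
          mul_le_mul_of_nonneg_right (le_max_left _ _)
            (Real.rpow_nonneg (by positivity) _)
        have h3 : max C 0 * (1 + ‖(i : EuclideanSpace ℝ (Fin d))‖) ^ (-β)
            ≤ max C 0 * ((1 + ρ) ^ β * (1 + ‖x‖) ^ (-β)) :=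
          mul_le_mul_of_nonneg_left (hkey i hi) (le_max_right _ _)
        linarith
    _ ≤ (N₀ : ℝ) * ((N₀ : ℝ) * (M ^ 2 * (max C 0 * (1 + ρ) ^ β))) * (1 + ‖x‖) ^ (-β) := by
        rw [Finset.sum_const, nsmul_eq_mul]
        have hc0 : (0 : ℝ) ≤ M ^ 2 * (max C 0 * ((1 + ρ) ^ β * (1 + ‖x‖) ^ (-β))) := by
          have : (0 : ℝ) ≤ max C 0 := le_max_right _ _
          positivity
        have := mul_le_mul_of_nonneg_right hTcard hc0
        calc (N₀ : ℝ) * ((T.card : ℝ) * (M ^ 2 * (max C 0 * ((1 + ρ) ^ β * (1 + ‖x‖) ^ (-β)))))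
            ≤ (N₀ : ℝ) * ((N₀ : ℝ) * (M ^ 2 * (max C 0 * ((1 + ρ) ^ β * (1 + ‖x‖) ^ (-β))))) :=
              mul_le_mul_of_nonneg_left this (Nat.cast_nonneg _)
          _ = (N₀ : ℝ) * ((N₀ : ℝ) * (M ^ 2 * (max C 0 * (1 + ρ) ^ β))) * (1 + ‖x‖) ^ (-β) := by
              ring
end

section
/- Let d ≥ 1 and 1 ≤ m ≤ d be real, let Σ ⊆ ℝ^d be uniformly discrete with separation r_Σ > 0 and satisfy #(Σ ∩ A_{R,R+1}) ≤ C·(R + 1)^{m−1} for all R ≥ 0 (quasi-m-dimensionality), and let (μ_i)_{i∈Σ}, ℙ, p_i(ε) be as in the product-measure setup. Fix ε > 0 and a > 1, and assume ‖i‖^{m−1}·p_i(ε) → 0 as ‖i‖ → ∞ along i ∈ Σ. For n ∈ ℕ let a_n := ℙ*{ω ∈ Ω : no annulus A_{r,r+n} with r ∈ [a^n, a^{n+1} − n] is ε-free for ω}, where ℙ* denotes outer measure. Then ∑_{n=1}^∞ a_n < ∞, and consequently for ℙ-almost every ω ∈ Ω, for all sufficiently large n there is r ∈ [a^n, a^{n+1}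 − n] for which A_{r,r+n} is ε-free for ω. -/
open MeasureTheory Set
open scoped ENNReal

lemma aux_weier {ι : Type*} (t : Finset ι) (f : ι → ℝ)
    (h0 : ∀ i ∈ t, 0 ≤ f i) (h1 : ∀ i ∈ t, f i ≤ 1) :
    1 - ∑ i ∈ t, f i ≤ ∏ i ∈ t, (1 - f i) := by
  classical
  induction t using Finset.induction_on with
  | empty => simp
  | @insert k u hk ih =>
    rw [Finset.sum_insert hk, Finset.prod_insert hk]
    have h0k := h0 k (Finset.mem_insert_self _ _)
    have h1k := h1 k (Finset.mem_insert_self _ _)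
    have ih' := ih (fun i hi => h0 i (Finset.mem_insert_of_mem hi))
      (fun i hi => h1 i (Finset.mem_insert_of_mem hi))
    have hs : 0 ≤ ∑ i ∈ u, f i := Finset.sum_nonneg fun i hi => h0 i (Finset.mem_insert_of_mem hi)
    nlinarith [mul_le_mul_of_nonneg_left ih' (by linarith : (0:ℝ) ≤ 1 - f k)]

lemma aux_prod_subset {ι : Type*} [DecidableEq ι] (f : ι → ℝ)
    (h0 : ∀ i, 0 ≤ f i) (h1 : ∀ i, f i ≤ 1) {A B : Finset ι} (hAB : A ⊆ B) :
    ∏ i ∈ B, f i ≤ ∏ i ∈ A, f i := by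
  rw [← Finset.prod_sdiff hAB]
  exact mul_le_of_le_one_left (Finset.prod_nonneg fun i _ => h0 i)
    (Finset.prod_le_one (fun i _ => h0 i) (fun i _ => h1 i))

lemma aux_cyl_meas {ι : Type*} (t : Finset ι) (s : ι → Set ℝ) (hs : ∀ i, MeasurableSet (s i)) :
    MeasurableSet {ω : ι → ℝ | ∀ i ∈ t, ω i ∈ s i} := by
  have : {ω : ι → ℝ | ∀ i ∈ t, ω i ∈ s i} = ⋂ i ∈ (t : Set ι), (fun ω : ι → ℝ => ω i) ⁻¹' s i := by
    ext ω; simp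
  rw [this]
  exact MeasurableSet.biInter t.countable_toSet fun i _ => measurable_pi_apply i (hs i)

lemma aux_free_meas {ι : Type*} (t : Finset ι) (ε : ℝ) :
    MeasurableSet {ω : ι → ℝ | ∀ i ∈ t, ω i ≤ ε} :=
  aux_cyl_meas t (fun _ => Iic ε) (fun _ => measurableSet_Iic)

lemma aux_indep {ι : Type*} (μ : ι → Measure ℝ)
    (P : Measure (ι → ℝ)) [IsProbabilityMeasure P]
    (hprod : ∀ (t : Finset ι) (s : ι → Set ℝ), (∀ i, MeasurableSet (s i)) →
      P {ω | ∀ i ∈ t, ω i ∈ s i} = ∏ i ∈ t, μ i (s i))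
    (ε : ℝ) (T : ℕ → Finset ι) (u : Finset ℕ)
    (hdisj : ∀ k ∈ u, ∀ l ∈ u, k ≠ l → Disjoint (T k) (T l)) :
    ∀ (t₀ : Finset ι) (s : ι → Set ℝ), (∀ i, MeasurableSet (s i)) →
      (∀ k ∈ u, Disjoint (T k) t₀) →
    P ({ω | ∀ i ∈ t₀, ω i ∈ s i} ∩ ⋂ k ∈ (u : Set ℕ), {ω : ι → ℝ | ∀ i ∈ T k, ω i ≤ ε}ᶜ)
      = (∏ i ∈ t₀, μ i (s i)) * ∏ k ∈ u, (1 - ∏ i ∈ T k, μ i (Iic ε)) := by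
  classical
  induction u using Finset.induction_on with
  | empty =>
    intro t₀ s hs _
    simp only [Finset.coe_empty, Set.mem_empty_iff_false, Set.iInter_of_empty,
      Set.iInter_false, Set.iInter_univ, Set.inter_univ, Finset.prod_empty, mul_one]
    exact hprod t₀ s hs
  | @insert k u hk ih =>
    intro t₀ s hs hd0
    have hdisj' : ∀ k' ∈ u, ∀ l ∈ u, k' ≠ l → Disjoint (T k') (T l) :=
      fun k' hk' l hl hne => hdisj k' (Finset.mem_insert_of_mem hk') l (Finset.mem_insert_of_mem hl) hne
    have hTk_t0 : Disjoint (T k) t₀ := hd0 k (Finset.mem_insert_self _ _)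
    set Base : Set (ι → ℝ) := {ω | ∀ i ∈ t₀, ω i ∈ s i} with hBase
    set Rest : Set (ι → ℝ) := ⋂ k' ∈ (u : Set ℕ), {ω : ι → ℝ | ∀ i ∈ T k', ω i ≤ ε}ᶜ with hRest
    set Ak : Set (ι → ℝ) := {ω : ι → ℝ | ∀ i ∈ T k, ω i ≤ ε} with hAk
    have hset : Base ∩ ⋂ k' ∈ ((insert k u : Finset ℕ) : Set ℕ),
        {ω : ι → ℝ | ∀ i ∈ T k', ω i ≤ ε}ᶜ = (Base ∩ Rest) \ ((Base ∩ Ak) ∩ Rest) := by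
      rw [Finset.coe_insert, Set.biInter_insert]
      ext ω
      simp only [Set.mem_inter_iff, Set.mem_compl_iff, Set.mem_diff, hRest, hAk, hBase]
      tauto
    rw [hset]
    have hRestMeas : MeasurableSet Rest :=
      MeasurableSet.biInter u.countable_toSet fun k' _ => (aux_free_meas (T k') ε).compl
    have hBaseMeas : MeasurableSet Base := aux_cyl_meas t₀ s hs
    have hInner : MeasurableSet ((Base ∩ Ak) ∩ Rest) :=
      ((hBaseMeas.inter (aux_free_meas (T k) ε)).inter hRestMeas)
    have hsub : (Base ∩ Ak) ∩ Rest ⊆ Base ∩ Rest := fun ω hω => ⟨hω.1.1, hω.2⟩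
    rw [measure_diff hsub hInner.nullMeasurableSet (measure_ne_top P _)]
    have h1 : P (Base ∩ Rest) = (∏ i ∈ t₀, μ i (s i)) * ∏ k' ∈ u, (1 - ∏ i ∈ T k', μ i (Iic ε)) :=
      ih hdisj' t₀ s hs (fun k' hk' => hd0 k' (Finset.mem_insert_of_mem hk'))
    set s' : ι → Set ℝ := fun i => if i ∈ T k then Iic ε else s i with hs'
    have hs'meas : ∀ i, MeasurableSet (s' i) := by
      intro i; by_cases h : i ∈ T k <;> simp [hs', h, measurableSet_Iic, hs i]
    have hBA : Base ∩ Ak = {ω : ι → ℝ | ∀ i ∈ t₀ ∪ T k, ω i ∈ s' i} := by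
      ext ω
      simp only [Set.mem_inter_iff, Set.mem_setOf_eq, Finset.mem_union, hBase, hAk, hs']
      constructor
      · rintro ⟨hb, ha⟩ i hi
        by_cases h : i ∈ T k
        · simpa [h] using ha i h
        · rcases hi with hi | hi
          · simpa [h] using hb i hi
          · exact absurd hi h
      · intro h
        constructor
        · intro i hi
          have hiTk : i ∉ T k := fun hc => (Finset.disjoint_right.mp hTk_t0) hi hc
          simpa [hiTk] using h i (Or.inl hi)
        · intro i hi
          simpa [hi] using h i (Or.inr hi)
    have h2 : P ((Base ∩ Ak) ∩ Rest)
        = ((∏ i ∈ t₀, μ i (s i)) * ∏ i ∈ T k, μ i (Iic ε))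
          * ∏ k' ∈ u, (1 - ∏ i ∈ T k', μ i (Iic ε)) := by
      rw [hBA]
      have := ih hdisj' (t₀ ∪ T k) s' hs'meas (fun k' hk' =>
        Finset.disjoint_union_right.mpr ⟨hd0 k' (Finset.mem_insert_of_mem hk'),
          hdisj k' (Finset.mem_insert_of_mem hk') k (Finset.mem_insert_self _ _)
            (fun hc => hk (hc ▸ hk'))⟩)
      rw [this, Finset.prod_union (Finset.disjoint_left.mpr fun i hi hc =>
        (Finset.disjoint_right.mp hTk_t0) hi hc)]
      congr 1
      congr 1
      · exact Finset.prod_congr rfl fun i hi => by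
          have : i ∉ T k := fun hc => (Finset.disjoint_right.mp hTk_t0) hi hc
          simp [hs', this]
      · exact Finset.prod_congr rfl fun i hi => by simp [hs', hi]
    rw [h1, h2, Finset.prod_insert hk]
    set Q := ∏ i ∈ t₀, μ i (s i)
    set R := ∏ k' ∈ u, (1 - ∏ i ∈ T k', μ i (Iic ε))
    set z := ∏ i ∈ T k, μ i (Iic ε)
    have hQRne : Q * R ≠ ⊤ := by
      rw [← h1]; exact measure_ne_top P _
    have : Q * R * (1 - z) = Q * R * 1 - Q * R * z :=
      ENNReal.mul_sub (fun _ _ => hQRne)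
    calc Q * R - Q * z * R = Q * R * 1 - Q * R * z := by ring_nf
      _ = Q * R * (1 - z) := this.symm
      _ = Q * ((1 - z) * R) := by ring

set_option maxHeartbeats 1000000 in
theorem stmt19 (d : ℕ) (hd : 1 ≤ d) (m : ℝ) (hm1 : 1 ≤ m) (hmd : m ≤ d)
    (S : Set (EuclideanSpace ℝ (Fin d)))
    (rSigma : ℝ) (hrSigma : 0 < rSigma)
    (hdisc : ∀ i ∈ S, ∀ j ∈ S, i ≠ j → rSigma ≤ ‖i - j‖)
    (C : ℝ)
    (hfin : ∀ R : ℝ, 0 ≤ R → (S ∩ annulus d R (R + 1)).Finite)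
    (hqmD : ∀ R : ℝ, 0 ≤ R →
      ((S ∩ annulus d R (R + 1)).ncard : ℝ) ≤ C * (R + 1) ^ (m - 1))
    (μ : S → Measure ℝ) (hprob : ∀ i, IsProbabilityMeasure (μ i))
    (hsupp : ∀ i, μ i (Icc (0 : ℝ) 1) = 1)
    (P : Measure (S → ℝ)) (hPprob : IsProbabilityMeasure P)
    (hprod : ∀ (t : Finset S) (s : S → Set ℝ), (∀ i, MeasurableSet (s i)) →
      P {ω | ∀ i ∈ t, ω i ∈ s i} = ∏ i ∈ t, μ i (s i))
    (ε : ℝ) (hε : 0 < ε) (a : ℝ) (ha : 1 < a)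
    (hdecay : Filter.Tendsto
      (fun i : S => ‖(i : EuclideanSpace ℝ (Fin d))‖ ^ (m - 1) *
        (μ i (Icc ε 1)).toReal)
      (Filter.comap (fun i : S => ‖(i : EuclideanSpace ℝ (Fin d))‖) Filter.atTop)
      (nhds 0)) :
    (∑' n : ℕ,
        P {ω | ¬ ∃ r ∈ Icc (a ^ (n + 1)) (a ^ (n + 2) - ((n : ℝ) + 1)),
          epsFree S ε ω (annulus d r (r + ((n : ℝ) + 1)))} < ⊤) ∧
    (∀ᵐ ω ∂P, ∃ N : ℕ, ∀ n : ℕ, N ≤ n →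
      ∃ r ∈ Icc (a ^ n) (a ^ (n + 1) - (n : ℝ)),
        epsFree S ε ω (annulus d r (r + (n : ℝ)))) := by
  classical
  haveI := hPprob
  set E : ℕ → Set (S → ℝ) := fun n =>
    {ω | ¬ ∃ r ∈ Icc (a ^ (n + 1)) (a ^ (n + 2) - ((n : ℝ) + 1)),
      epsFree S ε ω (annulus d r (r + ((n : ℝ) + 1)))} with hE
  have ha0 : (0:ℝ) < a := lt_trans one_pos ha
  have hC0 : (0:ℝ) ≤ C := by
    have h := hqmD 0 le_rfl
    have h2 : (0:ℝ) ≤ ((S ∩ annulus d 0 (0 + 1)).ncard : ℝ) := Nat.cast_nonneg _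
    have h3 : C * ((0:ℝ) + 1) ^ (m - 1) = C := by
      rw [zero_add, Real.one_rpow, mul_one]
    linarith
  set p : S → ℝ := fun i => (μ i (Icc ε 1)).toReal with hp
  have hp0 : ∀ i, 0 ≤ p i := fun i => ENNReal.toReal_nonneg
  have hp1 : ∀ i, p i ≤ 1 := by
    intro i
    have h := ENNReal.toReal_mono ENNReal.one_ne_top (prob_le_one (μ := μ i) (s := Icc ε 1))
    simpa using h
  -- lower bound on μ i (Iic ε)
  have hIic : ∀ i : S, ENNReal.ofReal (1 - p i) ≤ μ i (Iic ε) := by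
    intro i
    have hico : μ i (Ioi ε) ≤ μ i (Icc ε 1) := by
      have hsub : Ioi ε ⊆ (Icc ε 1) ∪ (Icc (0:ℝ) 1)ᶜ := by
        intro x hx
        by_cases hx1 : x ∈ Icc (0:ℝ) 1
        · exact Or.inl ⟨le_of_lt hx, hx1.2⟩
        · exact Or.inr hx1
      calc μ i (Ioi ε) ≤ μ i (Icc ε 1) + μ i ((Icc (0:ℝ) 1)ᶜ) :=
            le_trans (measure_mono hsub) (measure_union_le _ _)
        _ = μ i (Icc ε 1) := by
            rw [prob_compl_eq_one_sub measurableSet_Icc, hsupp i, tsub_self, add_zero]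
    have h1 : μ i (Iic ε) = 1 - μ i (Ioi ε) := by
      rw [← prob_compl_eq_one_sub measurableSet_Ioi, compl_Ioi]
    have h2 : ENNReal.ofReal (1 - p i) = 1 - μ i (Icc ε 1) := by
      rw [ENNReal.ofReal_sub 1 (hp0 i), ENNReal.ofReal_one, hp,
        ENNReal.ofReal_toReal (measure_ne_top _ _)]
    rw [h1, h2]
    exact tsub_le_tsub_left hico 1
  set θ : ℝ := (a + 1) / (2 * a) with hθ
  have hθpos : 0 < θ := by positivity
  have hθlt1 : θ < 1 := by
    rw [hθ, div_lt_one (by positivity)]; linarith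
  have hθa : 1 < θ * a := by
    have h : θ * a = (a + 1) / 2 := by rw [hθ]; field_simp
    rw [h, lt_div_iff₀ (by norm_num : (0:ℝ) < 2)]; linarith
  set η : ℝ := 1 - θ with hη
  have hηpos : 0 < η := by rw [hη]; linarith
  have hC1 : (0:ℝ) < C + 1 := by linarith
  have h2d : (0:ℝ) < 2 ^ d := by positivity
  set δ : ℝ := η / ((C + 1) * 2 ^ d) with hδdef
  have hδpos : 0 < δ := div_pos hηpos (mul_pos hC1 h2d)
  -- decay
  obtain ⟨M₀, hM₀⟩ : ∃ M₀ : ℝ, ∀ i : S,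
      M₀ ≤ ‖(i : EuclideanSpace ℝ (Fin d))‖ →
      ‖(i : EuclideanSpace ℝ (Fin d))‖ ^ (m - 1) * p i < δ := by
    have h := Metric.tendsto_nhds.mp hdecay δ hδpos
    rw [Filter.eventually_comap, Filter.eventually_atTop] at h
    obtain ⟨M₀, hM⟩ := h
    refine ⟨M₀, fun i hi => ?_⟩
    have h2 := hM _ hi i rfl
    rw [Real.dist_eq, sub_zero] at h2
    exact lt_of_le_of_lt (le_abs_self _) h2
  set M : ℝ := max M₀ 1 with hMdef
  have hM1 : (1:ℝ) ≤ M := le_max_right _ _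
  -- finiteness of closed unit shells (as subsets of S)
  have hshell : ∀ R : ℝ, 0 ≤ R →
      {i : S | R ≤ ‖(i : EuclideanSpace ℝ (Fin d))‖ ∧
        ‖(i : EuclideanSpace ℝ (Fin d))‖ ≤ R + 1}.Finite := by
    intro R hR
    have himg : {i : S | R ≤ ‖(i : EuclideanSpace ℝ (Fin d))‖ ∧
        ‖(i : EuclideanSpace ℝ (Fin d))‖ ≤ R + 1}
        = (Subtype.val) ⁻¹' (S ∩ annulus d R (R + 1)) := by
      ext i
      simp [annulus, i.2]
    rw [himg]
    exact Set.Finite.preimage (Subtype.val_injective.injOn) (hfin R hR)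
  -- finiteness of half-open annuli
  have hhalf : ∀ (w : ℕ) (r : ℝ), 0 ≤ r →
      {i : S | r ≤ ‖(i : EuclideanSpace ℝ (Fin d))‖ ∧
        ‖(i : EuclideanSpace ℝ (Fin d))‖ < r + (w : ℝ)}.Finite := by
    intro w
    induction w with
    | zero =>
      intro r hr
      refine Set.Finite.subset Set.finite_empty fun i hi => ?_
      obtain ⟨h1, h2⟩ := hi
      norm_num at h2
      linarith
    | succ w ih =>
      intro r hr
      refine Set.Finite.subset ((ih r hr).union (hshell (r + w) (by positivity))) ?_
      intro i hi
      obtain ⟨h1, h2⟩ := hi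
      by_cases hc : ‖(i : EuclideanSpace ℝ (Fin d))‖ < r + (w : ℝ)
      · exact Or.inl ⟨h1, hc⟩
      · push_neg at hc
        refine Or.inr ⟨hc, ?_⟩
        push_cast at h2 ⊢
        linarith
  -- cardinality bound for half-open unit shells
  have hcard : ∀ (R : ℝ) (hR : 0 ≤ R)
      (hf : {i : S | R ≤ ‖(i : EuclideanSpace ℝ (Fin d))‖ ∧
        ‖(i : EuclideanSpace ℝ (Fin d))‖ < R + ((1:ℕ) : ℝ)}.Finite),
      ((hf.toFinset.card : ℝ)) ≤ C * (R + 1) ^ (m - 1) := by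
    intro R hR hf
    have hsub : {i : S | R ≤ ‖(i : EuclideanSpace ℝ (Fin d))‖ ∧
        ‖(i : EuclideanSpace ℝ (Fin d))‖ < R + ((1:ℕ) : ℝ)}
        ⊆ {i : S | R ≤ ‖(i : EuclideanSpace ℝ (Fin d))‖ ∧
        ‖(i : EuclideanSpace ℝ (Fin d))‖ ≤ R + 1} := by
      intro i hi
      refine ⟨hi.1, ?_⟩
      have := hi.2
      push_cast at this
      linarith
    have h1 : hf.toFinset.card = {i : S | R ≤ ‖(i : EuclideanSpace ℝ (Fin d))‖ ∧
        ‖(i : EuclideanSpace ℝ (Fin d))‖ < R + ((1:ℕ) : ℝ)}.ncard :=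
      (Set.ncard_eq_toFinset_card _ hf).symm
    have h2 : {i : S | R ≤ ‖(i : EuclideanSpace ℝ (Fin d))‖ ∧
        ‖(i : EuclideanSpace ℝ (Fin d))‖ < R + ((1:ℕ) : ℝ)}.ncard
        ≤ {i : S | R ≤ ‖(i : EuclideanSpace ℝ (Fin d))‖ ∧
        ‖(i : EuclideanSpace ℝ (Fin d))‖ ≤ R + 1}.ncard :=
      Set.ncard_le_ncard hsub (hshell R hR)
    have h3 : {i : S | R ≤ ‖(i : EuclideanSpace ℝ (Fin d))‖ ∧
        ‖(i : EuclideanSpace ℝ (Fin d))‖ ≤ R + 1}.ncard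
        = (S ∩ annulus d R (R + 1)).ncard := by
      have himg : S ∩ annulus d R (R + 1)
          = Subtype.val '' {i : S | R ≤ ‖(i : EuclideanSpace ℝ (Fin d))‖ ∧
            ‖(i : EuclideanSpace ℝ (Fin d))‖ ≤ R + 1} := by
        ext x
        constructor
        · rintro ⟨hxS, hxa⟩
          exact ⟨⟨x, hxS⟩, ⟨hxa.1, hxa.2⟩, rfl⟩
        · rintro ⟨i, hi, rfl⟩
          exact ⟨i.2, hi.1, hi.2⟩
      rw [himg, Set.ncard_image_of_injective _ Subtype.val_injective]
    have h4 := hqmD R hR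
    have h5 : (hf.toFinset.card : ℝ) ≤ ((S ∩ annulus d R (R + 1)).ncard : ℝ) := by
      rw [h1]
      exact_mod_cast h2.trans_eq h3
    linarith
  -- sum of p over a half-open unit shell
  have hsum_shell : ∀ (R : ℝ) (hR : M ≤ R)
      (hf : {i : S | R ≤ ‖(i : EuclideanSpace ℝ (Fin d))‖ ∧
        ‖(i : EuclideanSpace ℝ (Fin d))‖ < R + ((1:ℕ) : ℝ)}.Finite),
      ∑ i ∈ hf.toFinset, p i ≤ η := by
    intro R hR hf
    have hR1 : (1:ℝ) ≤ R := le_trans hM1 hR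
    have hR0 : (0:ℝ) ≤ R := by linarith
    have hRpos : (0:ℝ) < R := by linarith
    have hRm : (0:ℝ) < R ^ (m - 1) := Real.rpow_pos_of_pos hRpos _
    have hbd : ∀ i ∈ hf.toFinset, p i ≤ δ / R ^ (m - 1) := by
      intro i hi
      rw [Set.Finite.mem_toFinset] at hi
      have hnorm : R ≤ ‖(i : EuclideanSpace ℝ (Fin d))‖ := hi.1
      have hM0i : M₀ ≤ ‖(i : EuclideanSpace ℝ (Fin d))‖ :=
        le_trans (le_max_left _ _) (le_trans hR hnorm)
      have h1 := hM₀ i hM0i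
      have hpow : R ^ (m - 1) ≤ ‖(i : EuclideanSpace ℝ (Fin d))‖ ^ (m - 1) :=
        Real.rpow_le_rpow hR0 hnorm (by linarith)
      rw [le_div_iff₀ hRm]
      nlinarith [hp0 i]
    calc ∑ i ∈ hf.toFinset, p i ≤ hf.toFinset.card • (δ / R ^ (m - 1)) :=
          Finset.sum_le_card_nsmul _ _ _ hbd
      _ = (hf.toFinset.card : ℝ) * (δ / R ^ (m - 1)) := nsmul_eq_mul _ _
      _ ≤ (C * (R + 1) ^ (m - 1)) * (δ / R ^ (m - 1)) := by
          apply mul_le_mul_of_nonneg_right (hcard R hR0 hf) (by positivity)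
      _ = δ * C * ((R + 1) / R) ^ (m - 1) := by
          rw [Real.div_rpow (by linarith) hR0]
          field_simp
      _ ≤ δ * C * 2 ^ ((d:ℕ) : ℝ) := by
          have h2 : ((R + 1) / R) ^ (m - 1) ≤ (2:ℝ) ^ (m - 1) := by
            apply Real.rpow_le_rpow (by positivity) ?_ (by linarith)
            rw [div_le_iff₀ hRpos]; linarith
          have h3 : (2:ℝ) ^ (m - 1) ≤ 2 ^ ((d:ℕ) : ℝ) := by
            apply Real.rpow_le_rpow_of_exponent_le one_le_two
            have : (1:ℝ) ≤ (d:ℝ) := by exact_mod_cast hd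
            linarith
          have h4 : (0:ℝ) ≤ δ * C := mul_nonneg hδpos.le hC0
          nlinarith [h2.trans h3]
      _ ≤ η := by
          rw [Real.rpow_natCast]
          have hne : ((C + 1) * (2:ℝ) ^ d) ≠ 0 := by positivity
          have heq : δ * ((C + 1) * 2 ^ d) = η := by
            rw [hδdef]; exact div_mul_cancel₀ _ hne
          nlinarith [mul_pos hδpos h2d, heq]
  -- product bound over half-open annuli
  have hprodbd : ∀ (w : ℕ) (r : ℝ), M ≤ r →
      ∀ (hf : {i : S | r ≤ ‖(i : EuclideanSpace ℝ (Fin d))‖ ∧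
        ‖(i : EuclideanSpace ℝ (Fin d))‖ < r + (w : ℝ)}.Finite),
      θ ^ w ≤ ∏ i ∈ hf.toFinset, (1 - p i) := by
    intro w
    induction w with
    | zero =>
      intro r hr hf
      have hempty : hf.toFinset = ∅ := by
        ext i
        simp only [Set.Finite.mem_toFinset, Set.mem_setOf_eq, Finset.notMem_empty, iff_false,
          not_and, not_lt, Nat.cast_zero, add_zero]
        intro h; exact h
      rw [hempty]
      simp
    | succ w ih =>
      intro r hr hf
      have hr0 : (0:ℝ) ≤ r := le_trans (by linarith) hr
      have hfw := hhalf w r hr0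
      have hfs := hhalf 1 (r + w) (by positivity)
      have hun : hf.toFinset = hfw.toFinset ∪ hfs.toFinset := by
        ext i
        simp only [Set.Finite.mem_toFinset, Finset.mem_union, Set.mem_setOf_eq]
        constructor
        · rintro ⟨h1, h2⟩
          by_cases hc : ‖(i : EuclideanSpace ℝ (Fin d))‖ < r + (w : ℝ)
          · exact Or.inl ⟨h1, hc⟩
          · push_neg at hc
            refine Or.inr ⟨hc, ?_⟩
            push_cast at h2 ⊢
            linarith
        · rintro (⟨h1, h2⟩ | ⟨h1, h2⟩)
          · refine ⟨h1, ?_⟩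
            push_cast at h2 ⊢
            linarith
          · have hw0 : (0:ℝ) ≤ (w : ℝ) := Nat.cast_nonneg _
            refine ⟨by linarith, ?_⟩
            push_cast at h2 ⊢
            linarith
      have hdisjf : Disjoint hfw.toFinset hfs.toFinset := by
        rw [Finset.disjoint_left]
        intro i hi1 hi2
        rw [Set.Finite.mem_toFinset] at hi1 hi2
        exact absurd hi1.2 (not_lt.mpr hi2.1)
      have hshellprod : θ ≤ ∏ i ∈ hfs.toFinset, (1 - p i) := by
        have hsum := hsum_shell (r + w) (by
          have hw0 : (0:ℝ) ≤ (w : ℝ) := Nat.cast_nonneg _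
          linarith) hfs
        have hW := aux_weier hfs.toFinset (fun i => p i)
          (fun i _ => hp0 i) (fun i _ => hp1 i)
        have : θ = 1 - η := by rw [hη]; ring
        linarith
      have hihp := ih r hr hfw
      rw [hun, Finset.prod_union hdisjf, pow_succ]
      exact mul_le_mul hihp hshellprod hθpos.le
        (Finset.prod_nonneg fun i _ => by linarith [hp1 i])
  -- eventual bounds
  have hev1 : ∀ᶠ n : ℕ in Filter.atTop, M ≤ a ^ (n + 1) := by
    have h := (tendsto_pow_atTop_atTop_of_one_lt ha).eventually_ge_atTop M
    rw [Filter.eventually_atTop] at h ⊢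
    obtain ⟨N1, hN1⟩ := h
    exact ⟨N1, fun n hn => hN1 (n + 1) (by omega)⟩
  have hev2 : ∀ᶠ n : ℕ in Filter.atTop,
      ((n:ℝ) * ((n:ℝ) + 2) + ((n:ℝ) + 1)) ≤ (θ * a) ^ (n + 1) * (a - 1) * θ := by
    have hbpos : (0:ℝ) < θ * a := by positivity
    have hcpos : (0:ℝ) < (a - 1) * θ * (θ * a) / 5 :=
      div_pos (mul_pos (mul_pos (by linarith) hθpos) hbpos) (by norm_num)
    have ht := tendsto_pow_const_div_const_pow_of_one_lt 2 hθa
    have hev := ht.eventually_lt_const hcpos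
    filter_upwards [hev, Filter.eventually_ge_atTop 1] with n h1 h2
    have hn1 : (1:ℝ) ≤ (n:ℝ) := by exact_mod_cast h2
    have hbpow : (0:ℝ) < (θ * a) ^ n := pow_pos hbpos n
    rw [div_lt_iff₀ hbpow] at h1
    rw [pow_succ]
    nlinarith [h1, hn1, hbpow]
  -- the key estimate
  have hkey : ∀ᶠ n : ℕ in Filter.atTop, P (E n) ≤ ENNReal.ofReal (Real.exp (-(n:ℝ))) := by
    filter_upwards [hev1, hev2] with n hMa hgrow
    have hapow : (0:ℝ) < a ^ (n + 1) := pow_pos ha0 _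
    set X : ℝ := (a ^ (n + 1) * (a - 1) - ((n:ℝ) + 1)) / ((n:ℝ) + 2) with hX
    set K : ℕ := ⌊X⌋₊ + 1 with hK
    set rr : ℕ → ℝ := fun k => a ^ (n + 1) + (k : ℝ) * ((n:ℝ) + 2) with hrr
    have hrM : ∀ k : ℕ, M ≤ rr k := by
      intro k
      have hk0 : (0:ℝ) ≤ (k : ℝ) * ((n:ℝ) + 2) := by positivity
      simp only [hrr]
      linarith
    have hrpos : ∀ k, 0 ≤ rr k := fun k => le_trans (by linarith) (hrM k)
    have hfinT : ∀ k : ℕ, {i : S | (↑i : EuclideanSpace ℝ (Fin d)) ∈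
        annulus d (rr k) (rr k + ((n:ℝ) + 1))}.Finite := by
      intro k
      refine Set.Finite.subset (hhalf (n + 2) (rr k) (hrpos k)) ?_
      intro i hi
      obtain ⟨h1, h2⟩ := hi
      refine ⟨h1, ?_⟩
      push_cast
      linarith
    set T : ℕ → Finset S := fun k => (hfinT k).toFinset with hT
    -- probability that a single annulus is free
    have hθn2 : (0:ℝ) < θ ^ (n + 2) := pow_pos hθpos _
    have hθn2le : θ ^ (n + 2) ≤ 1 := pow_le_one₀ hθpos.le hθlt1.le
    have hqk : ∀ k : ℕ, ENNReal.ofReal (θ ^ (n + 2)) ≤ ∏ i ∈ T k, μ i (Iic ε) := by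
      intro k
      have hsubset : T k ⊆ (hhalf (n + 2) (rr k) (hrpos k)).toFinset := by
        intro i hi
        simp only [hT, Set.Finite.mem_toFinset] at hi ⊢
        obtain ⟨h1, h2⟩ := hi
        refine ⟨h1, ?_⟩
        push_cast
        linarith
      have h1 := hprodbd (n + 2) (rr k) (hrM k) (hhalf (n + 2) (rr k) (hrpos k))
      have h2 : ∏ i ∈ (hhalf (n + 2) (rr k) (hrpos k)).toFinset, (1 - p i)
          ≤ ∏ i ∈ T k, (1 - p i) :=
        aux_prod_subset (fun i => 1 - p i) (fun i => sub_nonneg.mpr (hp1 i))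
          (fun i => by show 1 - p i ≤ 1; linarith [hp0 i]) hsubset
      calc ENNReal.ofReal (θ ^ (n + 2)) ≤ ENNReal.ofReal (∏ i ∈ T k, (1 - p i)) :=
            ENNReal.ofReal_le_ofReal (h1.trans h2)
        _ = ∏ i ∈ T k, ENNReal.ofReal (1 - p i) :=
            ENNReal.ofReal_prod_of_nonneg (fun i _ => by linarith [hp1 i])
        _ ≤ ∏ i ∈ T k, μ i (Iic ε) := Finset.prod_le_prod' (fun i _ => hIic i)
    -- disjointness
    have hTdisj : ∀ k ∈ Finset.range K, ∀ l ∈ Finset.range K, k ≠ l → Disjoint (T k) (T l) := by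
      have key : ∀ k l : ℕ, k < l → Disjoint (T k) (T l) := by
        intro k l hkl
        rw [Finset.disjoint_left]
        intro i hik hil
        simp only [hT, Set.Finite.mem_toFinset] at hik hil
        obtain ⟨h1k, h2k⟩ := hik
        obtain ⟨h1l, h2l⟩ := hil
        have hcast : (k:ℝ) + 1 ≤ (l:ℝ) := by exact_mod_cast hkl
        have hn0 : (0:ℝ) ≤ (n:ℝ) := Nat.cast_nonneg _
        have : rr k + ((n:ℝ) + 1) < rr l := by
          simp only [hrr]
          nlinarith
        linarith
      intro k _ l _ hne
      rcases hne.lt_or_gt with h | h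
      · exact key k l h
      · exact (key l k h).symm
    -- X bounds
    have hXW : X * (((n:ℝ)) + 2) = a ^ (n + 1) * (a - 1) - ((n:ℝ) + 1) := by
      rw [hX]
      field_simp
    have hXn : (n:ℝ) ≤ θ ^ (n + 2) * X := by
      have e1 : θ ^ (n + 2) * (a ^ (n + 1) * (a - 1)) = (θ * a) ^ (n + 1) * (a - 1) * θ := by
        rw [mul_pow, pow_succ, pow_succ]
        ring
      have hn0 : (0:ℝ) ≤ (n:ℝ) := Nat.cast_nonneg _
      have e2 : θ ^ (n + 2) * ((n:ℝ) + 1) ≤ ((n:ℝ) + 1) :=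
        mul_le_of_le_one_left (by linarith) hθn2le
      have h3 : (n:ℝ) * ((n:ℝ) + 2) ≤ θ ^ (n + 2) * (X * (((n:ℝ)) + 2)) := by
        rw [hXW, mul_sub, e1]
        nlinarith [hgrow, e2]
      have h4 : θ ^ (n + 2) * (X * (((n:ℝ)) + 2)) = (θ ^ (n + 2) * X) * (((n:ℝ)) + 2) := by ring
      rw [h4] at h3
      have h5 : (0:ℝ) < (n:ℝ) + 2 := by linarith
      nlinarith [h3, h5]
    have hX0 : (0:ℝ) ≤ X := by
      by_contra hc
      push_neg at hc
      have hn0 : (0:ℝ) ≤ (n:ℝ) := Nat.cast_nonneg _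
      nlinarith [hXn, hθn2, hθn2le]
    -- range of annuli
    have hrange : ∀ k, k < K → rr k ∈ Icc (a ^ (n + 1)) (a ^ (n + 2) - ((n:ℝ) + 1)) := by
      intro k hk
      constructor
      · have : (0:ℝ) ≤ (k : ℝ) * ((n:ℝ) + 2) := by positivity
        simp only [hrr]
        linarith
      · have hkX : (k:ℝ) ≤ X := by
          have hkfl : k ≤ ⌊X⌋₊ := by omega
          calc (k:ℝ) ≤ (⌊X⌋₊ : ℝ) := by exact_mod_cast hkfl
            _ ≤ X := Nat.floor_le hX0
        have hpow2 : a ^ (n + 2) = a ^ (n + 1) * a := by rw [pow_succ]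
        have hmul := mul_le_mul_of_nonneg_right hkX (by positivity : (0:ℝ) ≤ (n:ℝ) + 2)
        simp only [hrr]
        rw [hpow2]
        nlinarith [hmul, hXW]
    -- E n is contained in the intersection of the "not free" events
    have hEsub : E n ⊆ ⋂ k ∈ ((Finset.range K : Finset ℕ) : Set ℕ),
        {ω : S → ℝ | ∀ i ∈ T k, ω i ≤ ε}ᶜ := by
      intro ω hω
      simp only [hE, Set.mem_setOf_eq] at hω
      rw [Set.mem_iInter₂]
      intro k hk
      rw [Finset.mem_coe, Finset.mem_range] at hk
      intro hA
      apply hω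
      refine ⟨rr k, hrange k hk, ?_⟩
      intro i hi
      have hiT : i ∈ T k := by
        simp only [hT, Set.Finite.mem_toFinset]
        exact hi
      exact hA i hiT
    have hmeas_eq : P (⋂ k ∈ ((Finset.range K : Finset ℕ) : Set ℕ),
        {ω : S → ℝ | ∀ i ∈ T k, ω i ≤ ε}ᶜ)
        = ∏ k ∈ Finset.range K, (1 - ∏ i ∈ T k, μ i (Iic ε)) := by
      have h := aux_indep μ P hprod ε T (Finset.range K) hTdisj ∅ (fun _ => Set.univ)
        (fun _ => MeasurableSet.univ) (fun _ _ => Finset.disjoint_empty_right _)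
      simpa using h
    calc P (E n) ≤ ∏ k ∈ Finset.range K, (1 - ∏ i ∈ T k, μ i (Iic ε)) := by
          rw [← hmeas_eq]; exact measure_mono hEsub
      _ ≤ ∏ k ∈ Finset.range K, ENNReal.ofReal (1 - θ ^ (n + 2)) := by
          apply Finset.prod_le_prod'
          intro k _
          have h1 : (1:ℝ≥0∞) - ∏ i ∈ T k, μ i (Iic ε)
              ≤ 1 - ENNReal.ofReal (θ ^ (n + 2)) := tsub_le_tsub_left (hqk k) 1
          have h2 : (1:ℝ≥0∞) - ENNReal.ofReal (θ ^ (n + 2))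
              = ENNReal.ofReal (1 - θ ^ (n + 2)) := by
            rw [ENNReal.ofReal_sub 1 (by positivity), ENNReal.ofReal_one]
          rw [← h2]
          exact h1
      _ = ENNReal.ofReal ((1 - θ ^ (n + 2)) ^ K) := by
          rw [Finset.prod_const, Finset.card_range, ← ENNReal.ofReal_pow (by linarith)]
      _ ≤ ENNReal.ofReal (Real.exp (-(n:ℝ))) := by
          apply ENNReal.ofReal_le_ofReal
          calc (1 - θ ^ (n + 2)) ^ K ≤ (Real.exp (-θ ^ (n + 2))) ^ K := by
                apply pow_le_pow_left₀ (by linarith)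
                linarith [Real.add_one_le_exp (-θ ^ (n + 2))]
            _ = Real.exp ((K:ℝ) * (-θ ^ (n + 2))) := (Real.exp_nat_mul _ K).symm
            _ ≤ Real.exp (-(n:ℝ)) := by
                apply Real.exp_le_exp.mpr
                have hKX : X < (K:ℝ) := by
                  calc X < ⌊X⌋₊ + 1 := Nat.lt_floor_add_one X
                    _ = (K:ℝ) := by rw [hK]; push_cast; ring
                nlinarith [hXn, hθn2, hθn2le, hKX]
  rw [Filter.eventually_atTop] at hkey
  obtain ⟨N, hN⟩ := hkey
  have hsum : ∑' n : ℕ, P (E n) < ⊤ := by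
    have hb : ∀ n : ℕ, P (E n)
        ≤ (if n < N then (1:ℝ≥0∞) else 0) + ENNReal.ofReal (Real.exp (-(n:ℝ))) := by
      intro n
      by_cases h : n < N
      · simp only [if_pos h]
        calc P (E n) ≤ 1 := prob_le_one
          _ ≤ 1 + ENNReal.ofReal (Real.exp (-(n:ℝ))) := le_self_add
      · simp only [if_neg h]
        rw [zero_add]
        exact hN n (not_lt.mp h)
    calc ∑' n, P (E n)
        ≤ ∑' n : ℕ, ((if n < N then (1:ℝ≥0∞) else 0) + ENNReal.ofReal (Real.exp (-(n:ℝ)))) :=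
          ENNReal.tsum_le_tsum hb
      _ = (∑' n : ℕ, (if n < N then (1:ℝ≥0∞) else 0))
          + ∑' n : ℕ, ENNReal.ofReal (Real.exp (-(n:ℝ))) := ENNReal.tsum_add
      _ < ⊤ := by
          apply ENNReal.add_lt_top.mpr
          constructor
          · have heq : ∑' n : ℕ, (if n < N then (1:ℝ≥0∞) else 0)
                = ∑ n ∈ Finset.range N, (if n < N then (1:ℝ≥0∞) else 0) :=
              tsum_eq_sum (fun n hn => if_neg (by simpa using hn))
            rw [heq]
            refine ENNReal.sum_lt_top.mpr fun n _ => ?_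
            split <;> simp
          · have hgeo : ∀ n : ℕ, ENNReal.ofReal (Real.exp (-(n:ℝ)))
                = (ENNReal.ofReal (Real.exp (-1))) ^ n := by
              intro n
              rw [← ENNReal.ofReal_pow (Real.exp_nonneg _), ← Real.exp_nat_mul]
              norm_num
            rw [tsum_congr hgeo, ENNReal.tsum_geometric]
            apply ENNReal.inv_lt_top.mpr
            rw [tsub_pos_iff_lt]
            exact ENNReal.ofReal_lt_one.mpr (Real.exp_lt_one_iff.mpr (by norm_num))
  constructor
  · exact hsum
  · have hzero : P (Filter.limsup E Filter.atTop) = 0 :=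
      measure_limsup_atTop_eq_zero hsum.ne
    filter_upwards [measure_eq_zero_iff_ae_notMem.mp hzero] with ω hω
    have hev : ∀ᶠ n in Filter.atTop, ω ∉ E n := by
      by_contra hc
      exact hω (Filter.mem_limsup_iff_frequently_mem.mpr
        ((Filter.not_eventually.mp hc).mono fun n h => not_not.mp h))
    rw [Filter.eventually_atTop] at hev
    obtain ⟨N', hN'⟩ := hev
    refine ⟨N' + 1, fun n hn => ?_⟩
    obtain ⟨k, rfl⟩ : ∃ k, n = k + 1 := ⟨n - 1, by omega⟩
    have h := hN' k (by omega)
    simp only [hE, Set.mem_setOf_eq, not_not] at h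
    obtain ⟨r, hr1, hr2⟩ := h
    push_cast
    exact ⟨r, hr1, hr2⟩
end
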